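/- arXiv:2303.02793 — 2 statements merged into one kernel-verified Lean document; each statement's English description precedes it below -/
import Mathlib

section
/- Let s(x,y,z) = 2x^2 + 6xy + 6x^2y + 2y^2 + 6xy^2 + 2x^2y^2 + 6xz + 6x^2z + 6yz + 24xyz + 6x^2yz + 6y^2z + 6xy^2z + 2z^2 + 6xz^2 + 2x^2z^2 + 6yz^2 + 6xyz^2 + 2y^2z^2 ∈ ℤ[x,y,z]. Then for every integer n ≥ 1, the number of 4×n arrays with entries in {0,1,2,3} such that each of the four values occurs exactly n times and no two vertically adjacent entries are equal equals the coefficient of the monomial x^n·y^n·z^n in the polynomial s(x,y,z)^n. -/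
open MvPolynomial

/-- The stepset polynomial `s(x,y,z)` from the analysis of OEIS A265234. -/
noncomputable def s10 : MvPolynomial (Fin 3) ℤ :=
  2 * X 0 ^ 2 + 6 * X 0 * X 1 + 6 * X 0 ^ 2 * X 1 + 2 * X 1 ^ 2 + 6 * X 0 * X 1 ^ 2 +
  2 * X 0 ^ 2 * X 1 ^ 2 + 6 * X 0 * X 2 + 6 * X 0 ^ 2 * X 2 + 6 * X 1 * X 2 +
  24 * X 0 * X 1 * X 2 + 6 * X 0 ^ 2 * X 1 * X 2 + 6 * X 1 ^ 2 * X 2 +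
  6 * X 0 * X 1 ^ 2 * X 2 + 2 * X 2 ^ 2 + 6 * X 0 * X 2 ^ 2 + 2 * X 0 ^ 2 * X 2 ^ 2 +
  6 * X 1 * X 2 ^ 2 + 6 * X 0 * X 1 * X 2 ^ 2 + 2 * X 1 ^ 2 * X 2 ^ 2

abbrev Col := Fin 4 × Fin 4 × Fin 4 × Fin 4

def validC (c : Col) : Prop := c.1 ≠ c.2.1 ∧ c.2.1 ≠ c.2.2.1 ∧ c.2.2.1 ≠ c.2.2.2

instance : DecidablePred validC := fun c => by unfold validC; infer_instance

def cntC (c : Col) (v : Fin 4) : ℕ :=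
  (if c.1 = v then 1 else 0) + (if c.2.1 = v then 1 else 0) +
  (if c.2.2.1 = v then 1 else 0) + (if c.2.2.2 = v then 1 else 0)

noncomputable def wtC (c : Col) : Fin 3 →₀ ℕ :=
  Finsupp.single 0 (cntC c 1) + Finsupp.single 1 (cntC c 2) + Finsupp.single 2 (cntC c 3)

def appC (c : Col) : Fin 4 → Fin 4 := fun i =>
  match i with
  | 0 => c.1
  | 1 => c.2.1
  | 2 => c.2.2.1
  | 3 => c.2.2.2

lemma mono3 (a b c : ℕ) :
    (monomial (Finsupp.single 0 a + Finsupp.single 1 b + Finsupp.single 2 c) (1:ℤ) :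
      MvPolynomial (Fin 3) ℤ) = X 0 ^ a * X 1 ^ b * X 2 ^ c := by
  rw [X_pow_eq_monomial, X_pow_eq_monomial, X_pow_eq_monomial, monomial_mul, monomial_mul,
    one_mul, one_mul]

set_option maxHeartbeats 4000000 in
lemma key : s10 = ∑ c : Col, if validC c then monomial (wtC c) (1:ℤ) else 0 := by
  rw [show (∑ c : Col, if validC c then monomial (wtC c) (1:ℤ) else 0)
      = ∑ a : Fin 4, ∑ b : Fin 4, ∑ c : Fin 4, ∑ d : Fin 4,
        (if validC (a,b,c,d) then monomial (wtC (a,b,c,d)) (1:ℤ) else 0) by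
    rw [Fintype.sum_prod_type]
    congr 1; funext a
    rw [Fintype.sum_prod_type]
    congr 1; funext b
    rw [Fintype.sum_prod_type]]
  simp only [Fin.sum_univ_four]
  simp (config := { decide := true }) only [validC, cntC, wtC, reduceIte, Nat.reduceAdd]
  simp only [mono3, pow_zero, pow_one, mul_one, one_mul]
  rw [s10]
  ring

lemma prod_monomial {ι : Type*} (s : Finset ι) (g : ι → (Fin 3 →₀ ℕ)) :
    (∏ j ∈ s, (monomial (g j) (1:ℤ) : MvPolynomial (Fin 3) ℤ)) = monomial (∑ j ∈ s, g j) 1 := by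
  classical
  induction s using Finset.cons_induction with
  | empty => simp
  | cons a s ha ih => rw [Finset.prod_cons, Finset.sum_cons, ih, monomial_mul, one_mul]

lemma cnt_total (c : Col) : ∑ v : Fin 4, cntC c v = 4 := by
  simp [cntC, Finset.sum_add_distrib, Finset.sum_ite_eq]

/-- For every `n ≥ 1`, the number of `4 × n` arrays with entries in `{0,1,2,3}`
such that each of the four values occurs exactly `n` times and no two vertically
adjacent entries are equal equals the coefficient of `xⁿyⁿzⁿ` in `s10 ^ n`. -/
theorem stmt10 (n : ℕ) (hn : 1 ≤ n) :
    (Nat.card {A : Fin 4 × Fin n → Fin 4 //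
        (∀ v : Fin 4, (Finset.filter (fun p => A p = v) Finset.univ).card = n) ∧
        (∀ (i : Fin 4) (j : Fin n), ∀ h : (i : ℕ) + 1 < 4,
          A (i, j) ≠ A (⟨(i : ℕ) + 1, h⟩, j))} : ℤ)
      = MvPolynomial.coeff
          (Finsupp.single 0 n + Finsupp.single 1 n + Finsupp.single 2 n)
          (s10 ^ n) := by
  classical
  set tgt : Fin 3 →₀ ℕ := Finsupp.single 0 n + Finsupp.single 1 n + Finsupp.single 2 n with htgt
  set V : Finset Col := Finset.univ.filter validC with hVdef
  -- s10 as a sum of monomials over valid columns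
  have hV : s10 = ∑ c ∈ V, monomial (wtC c) (1:ℤ) := by
    rw [hVdef, Finset.sum_filter]; exact key
  -- expand the power
  have hpow : s10 ^ n = ∑ f ∈ Fintype.piFinset (fun _ : Fin n => V),
      monomial (∑ j, wtC (f j)) (1:ℤ) := by
    calc s10 ^ n = ∏ _j : Fin n, s10 := by
          rw [Finset.prod_const, Finset.card_univ, Fintype.card_fin]
      _ = ∑ f ∈ Fintype.piFinset (fun _ : Fin n => V), ∏ j, monomial (wtC (f j)) (1:ℤ) := by
          simp_rw [hV]; exact Finset.prod_univ_sum _ _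
      _ = _ := Finset.sum_congr rfl fun f _ => prod_monomial _ _
  set T : Finset (Fin n → Col) :=
    (Fintype.piFinset (fun _ : Fin n => V)).filter (fun f => ∑ j, wtC (f j) = tgt) with hTdef
  have hcoeff : MvPolynomial.coeff tgt (s10 ^ n) = (T.card : ℤ) := by
    rw [hpow, coeff_sum]
    simp_rw [coeff_monomial]
    rw [Finset.sum_boole, hTdef]
  rw [hcoeff]
  -- now the combinatorial bijection
  congr 1
  -- the column-extraction map
  set F : (Fin 4 × Fin n → Fin 4) → (Fin n → Col) :=
    fun A j => (A (0, j), A (1, j), A (2, j), A (3, j)) with hFdef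
  set G : (Fin n → Col) → (Fin 4 × Fin n → Fin 4) :=
    fun f p => appC (f p.2) p.1 with hGdef
  have bridge : ∀ (A : Fin 4 × Fin n → Fin 4) (v : Fin 4),
      (Finset.filter (fun p => A p = v) Finset.univ).card = ∑ j : Fin n, cntC (F A j) v := by
    intro A v
    rw [Finset.card_filter, Fintype.sum_prod_type, Finset.sum_comm]
    refine Finset.sum_congr rfl fun j _ => ?_
    rw [Fin.sum_univ_four]
    rfl
  have hwsum : ∀ f : Fin n → Col, ∑ j, wtC (f j)
      = Finsupp.single 0 (∑ j, cntC (f j) 1) + Finsupp.single 1 (∑ j, cntC (f j) 2)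
        + Finsupp.single 2 (∑ j, cntC (f j) 3) := by
    intro f
    simp only [wtC, Finset.sum_add_distrib, ← Finsupp.singleAddHom_apply, ← map_sum]
  have hsum_iff : ∀ f : Fin n → Col, (∑ j, wtC (f j) = tgt) ↔
      (∑ j, cntC (f j) 1 = n ∧ ∑ j, cntC (f j) 2 = n ∧ ∑ j, cntC (f j) 3 = n) := by
    intro f
    rw [hwsum f, htgt]
    constructor
    · intro h
      refine ⟨?_, ?_, ?_⟩
      · simpa using DFunLike.congr_fun h 0
      · simpa using DFunLike.congr_fun h 1
      · simpa using DFunLike.congr_fun h 2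
    · rintro ⟨h1, h2, h3⟩
      rw [h1, h2, h3]
  have htot : ∀ f : Fin n → Col,
      (∑ j, cntC (f j) 0) + (∑ j, cntC (f j) 1) + (∑ j, cntC (f j) 2) + (∑ j, cntC (f j) 3)
        = 4 * n := by
    intro f
    have h1 : ∑ j : Fin n, (∑ v : Fin 4, cntC (f j) v) = ∑ _j : Fin n, 4 :=
      Finset.sum_congr rfl fun j _ => cnt_total (f j)
    simpa [Fin.sum_univ_four, Finset.sum_add_distrib, Finset.sum_const, Finset.card_univ,
      mul_comm] using h1
  -- the equivalence
  have hmemT : ∀ f : Fin n → Col, f ∈ T ↔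
      (∀ j, validC (f j)) ∧ (∑ j, wtC (f j) = tgt) := by
    intro f
    rw [hTdef, Finset.mem_filter, Fintype.mem_piFinset]
    simp only [hVdef, Finset.mem_filter, Finset.mem_univ, true_and]
  have e : {A : Fin 4 × Fin n → Fin 4 //
        (∀ v : Fin 4, (Finset.filter (fun p => A p = v) Finset.univ).card = n) ∧
        (∀ (i : Fin 4) (j : Fin n), ∀ h : (i : ℕ) + 1 < 4,
          A (i, j) ≠ A (⟨(i : ℕ) + 1, h⟩, j))} ≃ {f // f ∈ T} := by
    refine ⟨fun A => ⟨F A.1, ?_⟩, fun f => ⟨G f.1, ?_, ?_⟩, ?_, ?_⟩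
    · -- F A ∈ T
      obtain ⟨A, hAcnt, hAadj⟩ := A
      rw [hmemT]
      constructor
      · intro j
        exact ⟨hAadj 0 j (by norm_num), hAadj 1 j (by norm_num), hAadj 2 j (by norm_num)⟩
      · rw [hsum_iff]
        exact ⟨by rw [← bridge A 1]; exact hAcnt 1, by rw [← bridge A 2]; exact hAcnt 2,
          by rw [← bridge A 3]; exact hAcnt 3⟩
    · -- counts for G f
      obtain ⟨f, hf⟩ := f
      rw [hmemT] at hf
      obtain ⟨hfv, hfs⟩ := hf
      have hFG : F (G f) = f := by
        funext j
        show (appC (f j) 0, appC (f j) 1, appC (f j) 2, appC (f j) 3) = f j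
        rfl
      rw [hsum_iff] at hfs
      obtain ⟨h1, h2, h3⟩ := hfs
      have h0 : ∑ j, cntC (f j) 0 = n := by have := htot f; omega
      intro v
      rw [bridge (G f) v, hFG]
      fin_cases v
      · exact h0
      · exact h1
      · exact h2
      · exact h3
    · -- adjacency for G f
      obtain ⟨f, hf⟩ := f
      rw [hmemT] at hf
      intro i j h
      fin_cases i
      · exact (hf.1 j).1
      · exact (hf.1 j).2.1
      · exact (hf.1 j).2.2
      · exact absurd h (by decide)
    · -- left inverse
      rintro ⟨A, hA⟩
      ext p
      obtain ⟨i, j⟩ := p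
      fin_cases i <;> rfl
    · -- right inverse
      rintro ⟨f, hf⟩
      apply Subtype.ext
      funext j
      show (appC (f j) 0, appC (f j) 1, appC (f j) 2, appC (f j) 3) = f j
      rfl
  rw [Nat.card_congr e, Nat.card_eq_finsetCard]
end

section
/- The sequence a is D-finite: there exist an integer r ≥ 1 and polynomials p0, …, pr ∈ ℤ[x], not all zero, such that p0(n)·a(n) + p1(n)·a(n+1) + ⋯ + pr(n)·a(n+r) = 0 for all integers n ≥ 1. -/
/-- `a172671 n` is the number of `3n × 6` matrices with entries in `{0,1,2}` such
that every row sum equals `2` and every column sum equals `n` (OEIS A172671). -/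
noncomputable def a172671 (n : ℕ) : ℕ :=
  Nat.card {M : Fin (3 * n) → Fin 6 → Fin 3 //
    (∀ i : Fin (3 * n), ∑ j : Fin 6, ((M i j : ℕ)) = 2) ∧
    (∀ j : Fin 6, ∑ i : Fin (3 * n), ((M i j : ℕ)) = n)}

open Polynomial
namespace A172671



/-- Formal Gaussian moments: w k = (k-1)!! for even k, 0 for odd. -/
def w : ℕ → ℚ
  | 0 => 1
  | 1 => 0
  | (k+2) => (k+1) * w k

/-- The moment functional. -/
noncomputable def L (p : Polynomial ℚ) : ℚ := p.sum fun k c => c * w k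

lemma L_add (p q : Polynomial ℚ) : L (p + q) = L p + L q := by
  unfold L
  exact Polynomial.sum_add_index p q _ (fun k => by simp) (fun k a b => add_mul a b (w k))

lemma L_monomial (k : ℕ) (a : ℚ) : L (monomial k a) = a * w k := by
  unfold L
  exact Polynomial.sum_monomial_index a (fun k c => c * w k) (by simp)

lemma L_zero : L 0 = 0 := by simp [L]

lemma L_Cmul (a : ℚ) (p : Polynomial ℚ) : L (C a * p) = a * L p := by
  induction p using Polynomial.induction_on' with
  | add q r hq hr => rw [mul_add, L_add, L_add, hq, hr, mul_add]
  | monomial k b =>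
      rw [show C a * monomial k b = monomial k (a*b) by simp [C_mul_monomial],
        L_monomial, L_monomial]; ring

lemma L_sub (p q : Polynomial ℚ) : L (p - q) = L p - L q := by
  have := L_add (p - q) q; simp at this; linarith

lemma stein (p : Polynomial ℚ) : L (X * p) = L (derivative p) := by
  induction p using Polynomial.induction_on' with
  | add q r hq hr => rw [mul_add, L_add, map_add, L_add, hq, hr]
  | monomial k a =>
      rw [derivative_monomial, show (X : Polynomial ℚ) * monomial k a = monomial (k+1) a by
        simpa using (monomial_mul_monomial 1 k 1 a).symm, L_monomial, L_monomial]
      cases k with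
      | zero => simp [w]
      | succ m => rw [show m + 1 + 1 = m + 2 from rfl, w]; push_cast; ring

lemma L_one : L 1 = 1 := by
  rw [show (1 : Polynomial ℚ) = monomial 0 1 by simp, L_monomial, w]; ring

/-- The "plus" Hermite polynomials, EGF e^{xz+z²/2}. -/
noncomputable def phi : ℕ → Polynomial ℚ
  | 0 => 1
  | (n+1) => X * phi n + derivative (phi n)

lemma dphi (n : ℕ) : derivative (phi (n+1)) = C ((n:ℚ)+1) * phi n := by
  induction n with
  | zero => simp [phi]
  | succ m ih =>
      rw [show phi (m+2) = X * phi (m+1) + derivative (phi (m+1)) from rfl]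
      have hh : derivative (phi m) = phi (m+1) - X * phi m := by
        rw [show phi (m+1) = X * phi m + derivative (phi m) from rfl]; ring
      rw [derivative_add, derivative_mul, derivative_X, ih, derivative_mul, derivative_C, hh]
      push_cast [C_add, C_1]; ring

lemma dphi' (k : ℕ) : derivative (phi k) = C ((k:ℚ)) * phi (k-1) := by
  cases k with
  | zero => simp [phi]
  | succ m => rw [dphi]; push_cast; simp


lemma L_natCast_mul (x : ℕ) (p : Polynomial ℚ) : L ((x : Polynomial ℚ) * p) = (x : ℚ) * L p := by
  rw [← C_eq_natCast]; exact L_Cmul _ _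

lemma dphi0 (n : ℕ) : derivative (phi n) = phi (n+1) - X * phi n := by
  rw [show phi (n+1) = X * phi n + derivative (phi n) from rfl]; ring

lemma dphiN (k : ℕ) : derivative (phi k) = ((k : Polynomial ℚ)) * phi (k-1) := by
  rw [dphi', C_eq_natCast]

lemma lemGX (x : ℕ) : ((x : Polynomial ℚ)) * (X * phi (x-1)) =
    ((x : Polynomial ℚ)) * phi x - ((x : Polynomial ℚ)) * (((x-1 : ℕ) : Polynomial ℚ) * phi (x-2)) := by
  cases x with
  | zero => simp
  | succ y =>
      have h1 : phi (y+1) = X * phi y + derivative (phi y) := rfl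
      have h2 := dphiN y
      rw [show y + 1 - 1 = y from rfl, show y + 1 - 2 = y - 1 by omega]
      push_cast
      linear_combination (-((y:Polynomial ℚ)) - 1) * h1 + (-(y:Polynomial ℚ) - 1) * h2

def dsc (x : ℕ) : ℕ → ℚ
  | 0 => 1
  | 1 => (x : ℚ)
  | _+2 => (x : ℚ) * (((x-1 : ℕ) : ℚ))

lemma dsc_0 (x : ℕ) : dsc x 0 = 1 := rfl
lemma dsc_1 (x : ℕ) : dsc x 1 = (x : ℚ) := rfl
lemma dsc_2 (x : ℕ) : dsc x 2 = (x : ℚ) * (((x-1 : ℕ) : ℚ)) := rfl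

lemma fact_dsc (x e : ℕ) (he : e ≤ 2) (hle : e ≤ x) :
    ((x.factorial : ℚ)) = dsc x e * (((x - e).factorial : ℚ)) := by
  interval_cases e
  · simp [dsc]
  · obtain ⟨y, rfl⟩ : ∃ y, x = y + 1 := ⟨x-1, by omega⟩
    rw [show y+1-1 = y from rfl, dsc, Nat.factorial_succ]
    push_cast; ring
  · obtain ⟨y, rfl⟩ : ∃ y, x = y + 2 := ⟨x-2, by omega⟩
    rw [show y+2-2 = y from rfl, dsc, show y+2-1 = y+1 from rfl, Nat.factorial_succ,
      Nat.factorial_succ]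
    push_cast; ring

lemma dsc_zero (x e : ℕ) (he : e ≤ 2) (h : x < e) : dsc x e = 0 := by
  interval_cases e
  · omega
  · interval_cases x
    · simp [dsc]
  · interval_cases x
    · simp [dsc]
    · simp [dsc]

def enc : Fin 21 → Fin 6 → Fin 3 :=
  ![![2,0,0,0,0,0],![1,1,0,0,0,0],![1,0,1,0,0,0],![1,0,0,1,0,0],![1,0,0,0,1,0],![1,0,0,0,0,1],
    ![0,2,0,0,0,0],![0,1,1,0,0,0],![0,1,0,1,0,0],![0,1,0,0,1,0],![0,1,0,0,0,1],
    ![0,0,2,0,0,0],![0,0,1,1,0,0],![0,0,1,0,1,0],![0,0,1,0,0,1],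
    ![0,0,0,2,0,0],![0,0,0,1,1,0],![0,0,0,1,0,1],
    ![0,0,0,0,2,0],![0,0,0,0,1,1],
    ![0,0,0,0,0,2]]

def enc' (q : Fin 21) : {r : Fin 6 → Fin 3 // ∑ j, ((r j : ℕ)) = 2} :=
  ⟨enc q, by revert q; decide⟩

lemma enc'_bij : Function.Bijective enc' := by decide

noncomputable def encEquiv : Fin 21 ≃ {r : Fin 6 → Fin 3 // ∑ j, ((r j : ℕ)) = 2} :=
  Equiv.ofBijective enc' enc'_bij

lemma enc_sum (q : Fin 21) : ∑ j, ((enc q j : ℕ)) = 2 := (enc' q).2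

/-- number of m×6 matrices over {0,1,2} with row sums 2 and column sums v -/
noncomputable def G (v : Fin 6 → ℕ) (m : ℕ) : ℕ :=
  Nat.card {M : Fin m → Fin 6 → Fin 3 //
    (∀ i, ∑ j, ((M i j : ℕ)) = 2) ∧ (∀ j, ∑ i, ((M i j : ℕ)) = v j)}

/-- fiber: matrices with first row prescribed (encoded by q) removed -/
noncomputable def Fib (v : Fin 6 → ℕ) (m : ℕ) (q : Fin 21) : ℕ :=
  Nat.card {M : Fin m → Fin 6 → Fin 3 //
    (∀ i, ∑ j, ((M i j : ℕ)) = 2) ∧ (∀ j, (∑ i, ((M i j : ℕ))) + ((enc q j : ℕ)) = v j)}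


variable (v : Fin 6 → ℕ) (m : ℕ)

abbrev MatT (v : Fin 6 → ℕ) (m : ℕ) := {M : Fin m → Fin 6 → Fin 3 //
    (∀ i, ∑ j, ((M i j : ℕ)) = 2) ∧ (∀ j, ∑ i, ((M i j : ℕ)) = v j)}

abbrev FibT (v : Fin 6 → ℕ) (m : ℕ) (q : Fin 21) := {M : Fin m → Fin 6 → Fin 3 //
    (∀ i, ∑ j, ((M i j : ℕ)) = 2) ∧ (∀ j, (∑ i, ((M i j : ℕ))) + ((enc q j : ℕ)) = v j)}

lemma dec_enc (q : Fin 21) (r : Fin 6 → Fin 3) (hs : ∑ j, ((r j : ℕ)) = 2) (h : r = enc q) :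
    encEquiv.symm ⟨r, hs⟩ = q := by
  have : (⟨r, hs⟩ : {r : Fin 6 → Fin 3 // ∑ j, ((r j : ℕ)) = 2}) = enc' q := Subtype.ext h
  rw [this]
  exact encEquiv.symm_apply_apply q

noncomputable def fwd (M : MatT v (m+1)) : Σ q : Fin 21, FibT v m q :=
  ⟨encEquiv.symm ⟨M.1 0, M.2.1 0⟩,
    (fun i => M.1 i.succ),
    ⟨fun i => M.2.1 i.succ, by
      intro j
      have hq : enc (encEquiv.symm ⟨M.1 0, M.2.1 0⟩) = M.1 0 :=
        congrArg Subtype.val (encEquiv.apply_symm_apply ⟨M.1 0, M.2.1 0⟩)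
      have h2 := M.2.2 j
      rw [Fin.sum_univ_succ] at h2
      rw [hq]
      show (∑ i : Fin m, ((M.1 i.succ j : ℕ))) + ((M.1 0 j : ℕ)) = v j
      omega⟩⟩

noncomputable def bwd (x : Σ q : Fin 21, FibT v m q) : MatT v (m+1) :=
  ⟨Fin.cons (enc x.1) x.2.1, by
    constructor
    · intro i
      refine Fin.cases ?_ ?_ i
      · simpa using enc_sum x.1
      · intro k; simpa using x.2.2.1 k
    · intro j
      rw [Fin.sum_univ_succ]
      simpa [add_comm] using x.2.2.2 j⟩

lemma fwd_bwd_fst (x : Σ q : Fin 21, FibT v m q) : (fwd v m (bwd v m x)).1 = x.1 := by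
  apply dec_enc
  show (Fin.cons (enc x.1) x.2.1 : Fin (m+1) → Fin 6 → Fin 3) 0 = enc x.1
  rw [Fin.cons_zero]

noncomputable def peelEquiv : MatT v (m+1) ≃ Σ q : Fin 21, FibT v m q where
  toFun := fwd v m
  invFun := bwd v m
  left_inv := by
    rintro ⟨M, hM⟩
    apply Subtype.ext
    show (bwd v m (fwd v m ⟨M, hM⟩)).1 = M
    simp only [fwd, bwd]
    funext i
    refine Fin.cases ?_ ?_ i
    · rw [Fin.cons_zero]
      exact congrArg Subtype.val (encEquiv.apply_symm_apply ⟨M 0, hM.1 0⟩)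
    · intro k
      rw [Fin.cons_succ]
  right_inv := by
    intro x
    refine Sigma.ext (fwd_bwd_fst v m x) ?_
    refine (Subtype.heq_iff_coe_eq ?_).2 ?_
    · intro N
      rw [fwd_bwd_fst v m x]
    · show ((fwd v m (bwd v m x)).2 : Fin m → Fin 6 → Fin 3) = x.2.1
      simp only [fwd, bwd]
      funext i
      rw [Fin.cons_succ]



lemma G_peel (v : Fin 6 → ℕ) (m : ℕ) :
    G v (m+1) = ∑ q : Fin 21, Fib v m q := by
  show Nat.card (MatT v (m+1)) = _
  rw [Nat.card_congr (peelEquiv v m)]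
  rw [Nat.card_eq_fintype_card, Fintype.card_sigma]
  apply Finset.sum_congr rfl
  intro q _
  rw [show Fib v m q = Nat.card (FibT v m q) from rfl, Nat.card_eq_fintype_card]

lemma Fib_eval (v : Fin 6 → ℕ) (m : ℕ) (q : Fin 21) :
    Fib v m q = if (∀ j, ((enc q j : ℕ)) ≤ v j) then G (fun j => v j - ((enc q j : ℕ))) m else 0 := by
  split_ifs with h
  · apply Nat.card_congr
    apply Equiv.subtypeEquivRight
    intro M
    constructor
    · rintro ⟨h1, h2⟩
      refine ⟨h1, fun j => ?_⟩
      have h2j := h2 j; have hj := h j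
      show ∑ i, ((M i j : ℕ)) = v j - ((enc q j : ℕ))
      omega
    · rintro ⟨h1, h2⟩
      refine ⟨h1, fun j => ?_⟩
      have h2j := h2 j; have hj := h j
      rw [show (fun j => v j - ((enc q j : ℕ))) j = v j - ((enc q j : ℕ)) from rfl] at h2j
      omega
  · push_neg at h
    obtain ⟨j, hj⟩ := h
    have : IsEmpty (FibT v m q) := by
      constructor
      rintro ⟨M, h1, h2⟩
      have := h2 j
      omega
    exact Nat.card_of_isEmpty


def encN (q : Fin 21) (j : Fin 6) : ℕ := (enc q j : ℕ)

lemma encN_le (q : Fin 21) (j : Fin 6) : encN q j ≤ 2 := by revert q j; decide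

lemma encN_sum (q : Fin 21) : ∑ j, encN q j = 2 := enc_sum q

noncomputable def kap (v : Fin 6 → ℕ) (q : Fin 21) : ℚ := ∏ j, dsc (v j) (encN q j)

lemma Fib_eval' (v : Fin 6 → ℕ) (m : ℕ) (q : Fin 21) :
    Fib v m q = if (∀ j, encN q j ≤ v j) then G (fun j => v j - encN q j) m else 0 :=
  Fib_eval v m q
lemma encNv_0_0 : encN (0 : Fin 21) 0 = 2 := by decide
lemma encNv_0_1 : encN (0 : Fin 21) 1 = 0 := by decide
lemma encNv_0_2 : encN (0 : Fin 21) 2 = 0 := by decide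
lemma encNv_0_3 : encN (0 : Fin 21) 3 = 0 := by decide
lemma encNv_0_4 : encN (0 : Fin 21) 4 = 0 := by decide
lemma encNv_0_5 : encN (0 : Fin 21) 5 = 0 := by decide
lemma encNv_1_0 : encN ((0 : Fin 20)).succ 0 = 1 := by decide
lemma encNv_1_1 : encN ((0 : Fin 20)).succ 1 = 1 := by decide
lemma encNv_1_2 : encN ((0 : Fin 20)).succ 2 = 0 := by decide
lemma encNv_1_3 : encN ((0 : Fin 20)).succ 3 = 0 := by decide
lemma encNv_1_4 : encN ((0 : Fin 20)).succ 4 = 0 := by decide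
lemma encNv_1_5 : encN ((0 : Fin 20)).succ 5 = 0 := by decide
lemma encNv_2_0 : encN ((0 : Fin 19)).succ.succ 0 = 1 := by decide
lemma encNv_2_1 : encN ((0 : Fin 19)).succ.succ 1 = 0 := by decide
lemma encNv_2_2 : encN ((0 : Fin 19)).succ.succ 2 = 1 := by decide
lemma encNv_2_3 : encN ((0 : Fin 19)).succ.succ 3 = 0 := by decide
lemma encNv_2_4 : encN ((0 : Fin 19)).succ.succ 4 = 0 := by decide
lemma encNv_2_5 : encN ((0 : Fin 19)).succ.succ 5 = 0 := by decide
lemma encNv_3_0 : encN ((0 : Fin 18)).succ.succ.succ 0 = 1 := by decide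
lemma encNv_3_1 : encN ((0 : Fin 18)).succ.succ.succ 1 = 0 := by decide
lemma encNv_3_2 : encN ((0 : Fin 18)).succ.succ.succ 2 = 0 := by decide
lemma encNv_3_3 : encN ((0 : Fin 18)).succ.succ.succ 3 = 1 := by decide
lemma encNv_3_4 : encN ((0 : Fin 18)).succ.succ.succ 4 = 0 := by decide
lemma encNv_3_5 : encN ((0 : Fin 18)).succ.succ.succ 5 = 0 := by decide
lemma encNv_4_0 : encN ((0 : Fin 17)).succ.succ.succ.succ 0 = 1 := by decide
lemma encNv_4_1 : encN ((0 : Fin 17)).succ.succ.succ.succ 1 = 0 := by decide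
lemma encNv_4_2 : encN ((0 : Fin 17)).succ.succ.succ.succ 2 = 0 := by decide
lemma encNv_4_3 : encN ((0 : Fin 17)).succ.succ.succ.succ 3 = 0 := by decide
lemma encNv_4_4 : encN ((0 : Fin 17)).succ.succ.succ.succ 4 = 1 := by decide
lemma encNv_4_5 : encN ((0 : Fin 17)).succ.succ.succ.succ 5 = 0 := by decide
lemma encNv_5_0 : encN ((0 : Fin 16)).succ.succ.succ.succ.succ 0 = 1 := by decide
lemma encNv_5_1 : encN ((0 : Fin 16)).succ.succ.succ.succ.succ 1 = 0 := by decide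
lemma encNv_5_2 : encN ((0 : Fin 16)).succ.succ.succ.succ.succ 2 = 0 := by decide
lemma encNv_5_3 : encN ((0 : Fin 16)).succ.succ.succ.succ.succ 3 = 0 := by decide
lemma encNv_5_4 : encN ((0 : Fin 16)).succ.succ.succ.succ.succ 4 = 0 := by decide
lemma encNv_5_5 : encN ((0 : Fin 16)).succ.succ.succ.succ.succ 5 = 1 := by decide
lemma encNv_6_0 : encN ((0 : Fin 15)).succ.succ.succ.succ.succ.succ 0 = 0 := by decide
lemma encNv_6_1 : encN ((0 : Fin 15)).succ.succ.succ.succ.succ.succ 1 = 2 := by decide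
lemma encNv_6_2 : encN ((0 : Fin 15)).succ.succ.succ.succ.succ.succ 2 = 0 := by decide
lemma encNv_6_3 : encN ((0 : Fin 15)).succ.succ.succ.succ.succ.succ 3 = 0 := by decide
lemma encNv_6_4 : encN ((0 : Fin 15)).succ.succ.succ.succ.succ.succ 4 = 0 := by decide
lemma encNv_6_5 : encN ((0 : Fin 15)).succ.succ.succ.succ.succ.succ 5 = 0 := by decide
lemma encNv_7_0 : encN ((0 : Fin 14)).succ.succ.succ.succ.succ.succ.succ 0 = 0 := by decide
lemma encNv_7_1 : encN ((0 : Fin 14)).succ.succ.succ.succ.succ.succ.succ 1 = 1 := by decide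
lemma encNv_7_2 : encN ((0 : Fin 14)).succ.succ.succ.succ.succ.succ.succ 2 = 1 := by decide
lemma encNv_7_3 : encN ((0 : Fin 14)).succ.succ.succ.succ.succ.succ.succ 3 = 0 := by decide
lemma encNv_7_4 : encN ((0 : Fin 14)).succ.succ.succ.succ.succ.succ.succ 4 = 0 := by decide
lemma encNv_7_5 : encN ((0 : Fin 14)).succ.succ.succ.succ.succ.succ.succ 5 = 0 := by decide
lemma encNv_8_0 : encN ((0 : Fin 13)).succ.succ.succ.succ.succ.succ.succ.succ 0 = 0 := by decide
lemma encNv_8_1 : encN ((0 : Fin 13)).succ.succ.succ.succ.succ.succ.succ.succ 1 = 1 := by decide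
lemma encNv_8_2 : encN ((0 : Fin 13)).succ.succ.succ.succ.succ.succ.succ.succ 2 = 0 := by decide
lemma encNv_8_3 : encN ((0 : Fin 13)).succ.succ.succ.succ.succ.succ.succ.succ 3 = 1 := by decide
lemma encNv_8_4 : encN ((0 : Fin 13)).succ.succ.succ.succ.succ.succ.succ.succ 4 = 0 := by decide
lemma encNv_8_5 : encN ((0 : Fin 13)).succ.succ.succ.succ.succ.succ.succ.succ 5 = 0 := by decide
lemma encNv_9_0 : encN ((0 : Fin 12)).succ.succ.succ.succ.succ.succ.succ.succ.succ 0 = 0 := by decide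
lemma encNv_9_1 : encN ((0 : Fin 12)).succ.succ.succ.succ.succ.succ.succ.succ.succ 1 = 1 := by decide
lemma encNv_9_2 : encN ((0 : Fin 12)).succ.succ.succ.succ.succ.succ.succ.succ.succ 2 = 0 := by decide
lemma encNv_9_3 : encN ((0 : Fin 12)).succ.succ.succ.succ.succ.succ.succ.succ.succ 3 = 0 := by decide
lemma encNv_9_4 : encN ((0 : Fin 12)).succ.succ.succ.succ.succ.succ.succ.succ.succ 4 = 1 := by decide
lemma encNv_9_5 : encN ((0 : Fin 12)).succ.succ.succ.succ.succ.succ.succ.succ.succ 5 = 0 := by decide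
lemma encNv_10_0 : encN ((0 : Fin 11)).succ.succ.succ.succ.succ.succ.succ.succ.succ.succ 0 = 0 := by decide
lemma encNv_10_1 : encN ((0 : Fin 11)).succ.succ.succ.succ.succ.succ.succ.succ.succ.succ 1 = 1 := by decide
lemma encNv_10_2 : encN ((0 : Fin 11)).succ.succ.succ.succ.succ.succ.succ.succ.succ.succ 2 = 0 := by decide
lemma encNv_10_3 : encN ((0 : Fin 11)).succ.succ.succ.succ.succ.succ.succ.succ.succ.succ 3 = 0 := by decide
lemma encNv_10_4 : encN ((0 : Fin 11)).succ.succ.succ.succ.succ.succ.succ.succ.succ.succ 4 = 0 := by decide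
lemma encNv_10_5 : encN ((0 : Fin 11)).succ.succ.succ.succ.succ.succ.succ.succ.succ.succ 5 = 1 := by decide
lemma encNv_11_0 : encN ((0 : Fin 10)).succ.succ.succ.succ.succ.succ.succ.succ.succ.succ.succ 0 = 0 := by decide
lemma encNv_11_1 : encN ((0 : Fin 10)).succ.succ.succ.succ.succ.succ.succ.succ.succ.succ.succ 1 = 0 := by decide
lemma encNv_11_2 : encN ((0 : Fin 10)).succ.succ.succ.succ.succ.succ.succ.succ.succ.succ.succ 2 = 2 := by decide
lemma encNv_11_3 : encN ((0 : Fin 10)).succ.succ.succ.succ.succ.succ.succ.succ.succ.succ.succ 3 = 0 := by decide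
lemma encNv_11_4 : encN ((0 : Fin 10)).succ.succ.succ.succ.succ.succ.succ.succ.succ.succ.succ 4 = 0 := by decide
lemma encNv_11_5 : encN ((0 : Fin 10)).succ.succ.succ.succ.succ.succ.succ.succ.succ.succ.succ 5 = 0 := by decide
lemma encNv_12_0 : encN ((0 : Fin 9)).succ.succ.succ.succ.succ.succ.succ.succ.succ.succ.succ.succ 0 = 0 := by decide
lemma encNv_12_1 : encN ((0 : Fin 9)).succ.succ.succ.succ.succ.succ.succ.succ.succ.succ.succ.succ 1 = 0 := by decide
lemma encNv_12_2 : encN ((0 : Fin 9)).succ.succ.succ.succ.succ.succ.succ.succ.succ.succ.succ.succ 2 = 1 := by decide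
lemma encNv_12_3 : encN ((0 : Fin 9)).succ.succ.succ.succ.succ.succ.succ.succ.succ.succ.succ.succ 3 = 1 := by decide
lemma encNv_12_4 : encN ((0 : Fin 9)).succ.succ.succ.succ.succ.succ.succ.succ.succ.succ.succ.succ 4 = 0 := by decide
lemma encNv_12_5 : encN ((0 : Fin 9)).succ.succ.succ.succ.succ.succ.succ.succ.succ.succ.succ.succ 5 = 0 := by decide
lemma encNv_13_0 : encN ((0 : Fin 8)).succ.succ.succ.succ.succ.succ.succ.succ.succ.succ.succ.succ.succ 0 = 0 := by decide
lemma encNv_13_1 : encN ((0 : Fin 8)).succ.succ.succ.succ.succ.succ.succ.succ.succ.succ.succ.succ.succ 1 = 0 := by decide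
lemma encNv_13_2 : encN ((0 : Fin 8)).succ.succ.succ.succ.succ.succ.succ.succ.succ.succ.succ.succ.succ 2 = 1 := by decide
lemma encNv_13_3 : encN ((0 : Fin 8)).succ.succ.succ.succ.succ.succ.succ.succ.succ.succ.succ.succ.succ 3 = 0 := by decide
lemma encNv_13_4 : encN ((0 : Fin 8)).succ.succ.succ.succ.succ.succ.succ.succ.succ.succ.succ.succ.succ 4 = 1 := by decide
lemma encNv_13_5 : encN ((0 : Fin 8)).succ.succ.succ.succ.succ.succ.succ.succ.succ.succ.succ.succ.succ 5 = 0 := by decide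
lemma encNv_14_0 : encN ((0 : Fin 7)).succ.succ.succ.succ.succ.succ.succ.succ.succ.succ.succ.succ.succ.succ 0 = 0 := by decide
lemma encNv_14_1 : encN ((0 : Fin 7)).succ.succ.succ.succ.succ.succ.succ.succ.succ.succ.succ.succ.succ.succ 1 = 0 := by decide
lemma encNv_14_2 : encN ((0 : Fin 7)).succ.succ.succ.succ.succ.succ.succ.succ.succ.succ.succ.succ.succ.succ 2 = 1 := by decide
lemma encNv_14_3 : encN ((0 : Fin 7)).succ.succ.succ.succ.succ.succ.succ.succ.succ.succ.succ.succ.succ.succ 3 = 0 := by decide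
lemma encNv_14_4 : encN ((0 : Fin 7)).succ.succ.succ.succ.succ.succ.succ.succ.succ.succ.succ.succ.succ.succ 4 = 0 := by decide
lemma encNv_14_5 : encN ((0 : Fin 7)).succ.succ.succ.succ.succ.succ.succ.succ.succ.succ.succ.succ.succ.succ 5 = 1 := by decide
lemma encNv_15_0 : encN ((0 : Fin 6)).succ.succ.succ.succ.succ.succ.succ.succ.succ.succ.succ.succ.succ.succ.succ 0 = 0 := by decide
lemma encNv_15_1 : encN ((0 : Fin 6)).succ.succ.succ.succ.succ.succ.succ.succ.succ.succ.succ.succ.succ.succ.succ 1 = 0 := by decide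
lemma encNv_15_2 : encN ((0 : Fin 6)).succ.succ.succ.succ.succ.succ.succ.succ.succ.succ.succ.succ.succ.succ.succ 2 = 0 := by decide
lemma encNv_15_3 : encN ((0 : Fin 6)).succ.succ.succ.succ.succ.succ.succ.succ.succ.succ.succ.succ.succ.succ.succ 3 = 2 := by decide
lemma encNv_15_4 : encN ((0 : Fin 6)).succ.succ.succ.succ.succ.succ.succ.succ.succ.succ.succ.succ.succ.succ.succ 4 = 0 := by decide
lemma encNv_15_5 : encN ((0 : Fin 6)).succ.succ.succ.succ.succ.succ.succ.succ.succ.succ.succ.succ.succ.succ.succ 5 = 0 := by decide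
lemma encNv_16_0 : encN ((0 : Fin 5)).succ.succ.succ.succ.succ.succ.succ.succ.succ.succ.succ.succ.succ.succ.succ.succ 0 = 0 := by decide
lemma encNv_16_1 : encN ((0 : Fin 5)).succ.succ.succ.succ.succ.succ.succ.succ.succ.succ.succ.succ.succ.succ.succ.succ 1 = 0 := by decide
lemma encNv_16_2 : encN ((0 : Fin 5)).succ.succ.succ.succ.succ.succ.succ.succ.succ.succ.succ.succ.succ.succ.succ.succ 2 = 0 := by decide
lemma encNv_16_3 : encN ((0 : Fin 5)).succ.succ.succ.succ.succ.succ.succ.succ.succ.succ.succ.succ.succ.succ.succ.succ 3 = 1 := by decide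
lemma encNv_16_4 : encN ((0 : Fin 5)).succ.succ.succ.succ.succ.succ.succ.succ.succ.succ.succ.succ.succ.succ.succ.succ 4 = 1 := by decide
lemma encNv_16_5 : encN ((0 : Fin 5)).succ.succ.succ.succ.succ.succ.succ.succ.succ.succ.succ.succ.succ.succ.succ.succ 5 = 0 := by decide
lemma encNv_17_0 : encN ((0 : Fin 4)).succ.succ.succ.succ.succ.succ.succ.succ.succ.succ.succ.succ.succ.succ.succ.succ.succ 0 = 0 := by decide
lemma encNv_17_1 : encN ((0 : Fin 4)).succ.succ.succ.succ.succ.succ.succ.succ.succ.succ.succ.succ.succ.succ.succ.succ.succ 1 = 0 := by decide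
lemma encNv_17_2 : encN ((0 : Fin 4)).succ.succ.succ.succ.succ.succ.succ.succ.succ.succ.succ.succ.succ.succ.succ.succ.succ 2 = 0 := by decide
lemma encNv_17_3 : encN ((0 : Fin 4)).succ.succ.succ.succ.succ.succ.succ.succ.succ.succ.succ.succ.succ.succ.succ.succ.succ 3 = 1 := by decide
lemma encNv_17_4 : encN ((0 : Fin 4)).succ.succ.succ.succ.succ.succ.succ.succ.succ.succ.succ.succ.succ.succ.succ.succ.succ 4 = 0 := by decide
lemma encNv_17_5 : encN ((0 : Fin 4)).succ.succ.succ.succ.succ.succ.succ.succ.succ.succ.succ.succ.succ.succ.succ.succ.succ 5 = 1 := by decide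
lemma encNv_18_0 : encN ((0 : Fin 3)).succ.succ.succ.succ.succ.succ.succ.succ.succ.succ.succ.succ.succ.succ.succ.succ.succ.succ 0 = 0 := by decide
lemma encNv_18_1 : encN ((0 : Fin 3)).succ.succ.succ.succ.succ.succ.succ.succ.succ.succ.succ.succ.succ.succ.succ.succ.succ.succ 1 = 0 := by decide
lemma encNv_18_2 : encN ((0 : Fin 3)).succ.succ.succ.succ.succ.succ.succ.succ.succ.succ.succ.succ.succ.succ.succ.succ.succ.succ 2 = 0 := by decide
lemma encNv_18_3 : encN ((0 : Fin 3)).succ.succ.succ.succ.succ.succ.succ.succ.succ.succ.succ.succ.succ.succ.succ.succ.succ.succ 3 = 0 := by decide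
lemma encNv_18_4 : encN ((0 : Fin 3)).succ.succ.succ.succ.succ.succ.succ.succ.succ.succ.succ.succ.succ.succ.succ.succ.succ.succ 4 = 2 := by decide
lemma encNv_18_5 : encN ((0 : Fin 3)).succ.succ.succ.succ.succ.succ.succ.succ.succ.succ.succ.succ.succ.succ.succ.succ.succ.succ 5 = 0 := by decide
lemma encNv_19_0 : encN ((0 : Fin 2)).succ.succ.succ.succ.succ.succ.succ.succ.succ.succ.succ.succ.succ.succ.succ.succ.succ.succ.succ 0 = 0 := by decide
lemma encNv_19_1 : encN ((0 : Fin 2)).succ.succ.succ.succ.succ.succ.succ.succ.succ.succ.succ.succ.succ.succ.succ.succ.succ.succ.succ 1 = 0 := by decide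
lemma encNv_19_2 : encN ((0 : Fin 2)).succ.succ.succ.succ.succ.succ.succ.succ.succ.succ.succ.succ.succ.succ.succ.succ.succ.succ.succ 2 = 0 := by decide
lemma encNv_19_3 : encN ((0 : Fin 2)).succ.succ.succ.succ.succ.succ.succ.succ.succ.succ.succ.succ.succ.succ.succ.succ.succ.succ.succ 3 = 0 := by decide
lemma encNv_19_4 : encN ((0 : Fin 2)).succ.succ.succ.succ.succ.succ.succ.succ.succ.succ.succ.succ.succ.succ.succ.succ.succ.succ.succ 4 = 1 := by decide
lemma encNv_19_5 : encN ((0 : Fin 2)).succ.succ.succ.succ.succ.succ.succ.succ.succ.succ.succ.succ.succ.succ.succ.succ.succ.succ.succ 5 = 1 := by decide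
lemma encNv_20_0 : encN ((0 : Fin 1)).succ.succ.succ.succ.succ.succ.succ.succ.succ.succ.succ.succ.succ.succ.succ.succ.succ.succ.succ.succ 0 = 0 := by decide
lemma encNv_20_1 : encN ((0 : Fin 1)).succ.succ.succ.succ.succ.succ.succ.succ.succ.succ.succ.succ.succ.succ.succ.succ.succ.succ.succ.succ 1 = 0 := by decide
lemma encNv_20_2 : encN ((0 : Fin 1)).succ.succ.succ.succ.succ.succ.succ.succ.succ.succ.succ.succ.succ.succ.succ.succ.succ.succ.succ.succ 2 = 0 := by decide
lemma encNv_20_3 : encN ((0 : Fin 1)).succ.succ.succ.succ.succ.succ.succ.succ.succ.succ.succ.succ.succ.succ.succ.succ.succ.succ.succ.succ 3 = 0 := by decide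
lemma encNv_20_4 : encN ((0 : Fin 1)).succ.succ.succ.succ.succ.succ.succ.succ.succ.succ.succ.succ.succ.succ.succ.succ.succ.succ.succ.succ 4 = 0 := by decide
lemma encNv_20_5 : encN ((0 : Fin 1)).succ.succ.succ.succ.succ.succ.succ.succ.succ.succ.succ.succ.succ.succ.succ.succ.succ.succ.succ.succ 5 = 2 := by decide

lemma key (v : Fin 6 → ℕ) :
    2 * (∑ q : Fin 21, kap v q * L (∏ j, phi (v j - encN q j))) =
    ((∑ j, v j : ℕ) : ℚ) * L (∏ j, phi (v j)) := by
  have st := stein (((v 0 : Polynomial ℚ)) * (phi (v 0 - 1) * phi (v 1) * phi (v 2) * phi (v 3) * phi (v 4) * phi (v 5)) + ((v 1 : Polynomial ℚ)) * (phi (v 0) * phi (v 1 - 1) * phi (v 2) * phi (v 3) * phi (v 4) * phi (v 5)) + ((v 2 : Polynomial ℚ)) * (phi (v 0) * phi (v 1) * phi (v 2 - 1) * phi (v 3) * phi (v 4) * phi (v 5)) + ((v 3 : Polynomial ℚ)) * (phi (v 0) * phi (v 1) * phi (v 2) * phi (v 3 - 1) * phi (v 4) * phi (v 5)) + ((v 4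 : Polynomial ℚ)) * (phi (v 0) * phi (v 1) * phi (v 2) * phi (v 3) * phi (v 4 - 1) * phi (v 5)) + ((v 5 : Polynomial ℚ)) * (phi (v 0) * phi (v 1) * phi (v 2) * phi (v 3) * phi (v 4) * phi (v 5 - 1)))
  have hd : derivative (((v 0 : Polynomial ℚ)) * (phi (v 0 - 1) * phi (v 1) * phi (v 2) * phi (v 3) * phi (v 4) * phi (v 5)) + ((v 1 : Polynomial ℚ)) * (phi (v 0) * phi (v 1 - 1) * phi (v 2) * phi (v 3) * phi (v 4) * phi (v 5)) + ((v 2 : Polynomial ℚ)) * (phi (v 0) * phi (v 1) * phi (v 2 - 1) * phi (v 3) * phi (v 4) * phi (v 5)) + ((v 3 : Polynomial ℚ)) * (phi (v 0) * phi (v 1) * phi (v 2) * phi (v 3 - 1) * phi (v 4) * phi (v 5)) + ((v 4 : Polynomial ℚ)) * (phi (v 0) * phi (v 1) * phi (v 2) * phi (v 3) * phi (v 4 - 1) * phi (v 5)) + ((v 5 : Polynomial ℚ)) * (phi (v 0) * phi (v 1) * phi (v 2) * phi (v 3) * phi (v 4) * phi (v 5 - 1))) = ((v 0 : Polynomial ℚ))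 * (((v 0 - 1 : ℕ) : Polynomial ℚ) * (phi (v 0 - 2) * phi (v 1) * phi (v 2) * phi (v 3) * phi (v 4) * phi (v 5))) + ((v 1 : Polynomial ℚ)) * (((v 1 - 1 : ℕ) : Polynomial ℚ) * (phi (v 0) * phi (v 1 - 2) * phi (v 2) * phi (v 3) * phi (v 4) * phi (v 5))) + ((v 2 : Polynomial ℚ)) * (((v 2 - 1 : ℕ) : Polynomial ℚ) * (phi (v 0) * phi (v 1) * phi (v 2 - 2) * phi (v 3) * phi (v 4) * phi (v 5))) + ((v 3 : Polynomial ℚ)) * (((v 3 - 1 : ℕ) : Polynomial ℚ) * (phi (v 0) * phi (v 1) * phi (v 2) * phi (v 3 - 2) * phi (v 4) * phi (v 5))) + ((v 4 : Polynomial ℚ)) * (((v 4 - 1 : ℕ) : Polynomial ℚ) * (phi (v 0) * phi (v 1) * phi (v 2) * phi (v 3) * phi (v 4 - 2) * phi (v 5))) + ((v 5 : Polynomial ℚ)) * (((v 5 - 1 : ℕ) : Polynomial ℚ) * (phi (v 0) * phi (v 1) * phi (v 2) * phi (v 3) * phi (v 4) * phi (v 5 - 2))) + ((v 0 : Polynomial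 ℚ)) * (((v 1 : Polynomial ℚ)) * (phi (v 0 - 1) * phi (v 1 - 1) * phi (v 2) * phi (v 3) * phi (v 4) * phi (v 5))) + ((v 0 : Polynomial ℚ)) * (((v 2 : Polynomial ℚ)) * (phi (v 0 - 1) * phi (v 1) * phi (v 2 - 1) * phi (v 3) * phi (v 4) * phi (v 5))) + ((v 0 : Polynomial ℚ)) * (((v 3 : Polynomial ℚ)) * (phi (v 0 - 1) * phi (v 1) * phi (v 2) * phi (v 3 - 1) * phi (v 4) * phi (v 5))) + ((v 0 : Polynomial ℚ)) * (((v 4 : Polynomial ℚ)) * (phi (v 0 - 1) * phi (v 1) * phi (v 2) * phi (v 3) * phi (v 4 - 1) * phi (v 5))) + ((v 0 : Polynomial ℚ)) * (((v 5 : Polynomial ℚ)) * (phi (v 0 - 1) * phi (v 1) * phi (v 2) * phi (v 3) * phi (v 4) * phi (v 5 - 1))) + ((v 1 : Polynomial ℚ)) * (((v 0 : Polynomial ℚ)) * (phi (v 0 - 1) * phi (v 1 - 1) * phi (v 2) * phi (v 3) * phi (v 4) * phi (v 5))) + ((v 1 : Polynomial ℚ)) * (((v 2 : Polynomial ℚ))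 * (phi (v 0) * phi (v 1 - 1) * phi (v 2 - 1) * phi (v 3) * phi (v 4) * phi (v 5))) + ((v 1 : Polynomial ℚ)) * (((v 3 : Polynomial ℚ)) * (phi (v 0) * phi (v 1 - 1) * phi (v 2) * phi (v 3 - 1) * phi (v 4) * phi (v 5))) + ((v 1 : Polynomial ℚ)) * (((v 4 : Polynomial ℚ)) * (phi (v 0) * phi (v 1 - 1) * phi (v 2) * phi (v 3) * phi (v 4 - 1) * phi (v 5))) + ((v 1 : Polynomial ℚ)) * (((v 5 : Polynomial ℚ)) * (phi (v 0) * phi (v 1 - 1) * phi (v 2) * phi (v 3) * phi (v 4) * phi (v 5 - 1))) + ((v 2 : Polynomial ℚ)) * (((v 0 : Polynomial ℚ)) * (phi (v 0 - 1) * phi (v 1) * phi (v 2 - 1) * phi (v 3) * phi (v 4) * phi (v 5))) + ((v 2 : Polynomial ℚ)) * (((v 1 : Polynomial ℚ)) * (phi (v 0) * phi (v 1 - 1) * phi (v 2 - 1) * phi (v 3) * phi (v 4) * phi (v 5))) + ((v 2 : Polynomial ℚ)) * (((v 3 : Polynomial ℚ)) * (phi (v 0) * phi (v 1) * phi (v 2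 - 1) * phi (v 3 - 1) * phi (v 4) * phi (v 5))) + ((v 2 : Polynomial ℚ)) * (((v 4 : Polynomial ℚ)) * (phi (v 0) * phi (v 1) * phi (v 2 - 1) * phi (v 3) * phi (v 4 - 1) * phi (v 5))) + ((v 2 : Polynomial ℚ)) * (((v 5 : Polynomial ℚ)) * (phi (v 0) * phi (v 1) * phi (v 2 - 1) * phi (v 3) * phi (v 4) * phi (v 5 - 1))) + ((v 3 : Polynomial ℚ)) * (((v 0 : Polynomial ℚ)) * (phi (v 0 - 1) * phi (v 1) * phi (v 2) * phi (v 3 - 1) * phi (v 4) * phi (v 5))) + ((v 3 : Polynomial ℚ)) * (((v 1 : Polynomial ℚ)) * (phi (v 0) * phi (v 1 - 1) * phi (v 2) * phi (v 3 - 1) * phi (v 4) * phi (v 5))) + ((v 3 : Polynomial ℚ)) * (((v 2 : Polynomial ℚ)) * (phi (v 0) * phi (v 1) * phi (v 2 - 1) * phi (v 3 - 1) * phi (v 4) * phi (v 5))) + ((v 3 : Polynomial ℚ)) * (((v 4 : Polynomial ℚ)) * (phi (v 0) * phi (v 1) * phi (v 2) * phi (v 3 - 1) * phi (v 4 - 1)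 * phi (v 5))) + ((v 3 : Polynomial ℚ)) * (((v 5 : Polynomial ℚ)) * (phi (v 0) * phi (v 1) * phi (v 2) * phi (v 3 - 1) * phi (v 4) * phi (v 5 - 1))) + ((v 4 : Polynomial ℚ)) * (((v 0 : Polynomial ℚ)) * (phi (v 0 - 1) * phi (v 1) * phi (v 2) * phi (v 3) * phi (v 4 - 1) * phi (v 5))) + ((v 4 : Polynomial ℚ)) * (((v 1 : Polynomial ℚ)) * (phi (v 0) * phi (v 1 - 1) * phi (v 2) * phi (v 3) * phi (v 4 - 1) * phi (v 5))) + ((v 4 : Polynomial ℚ)) * (((v 2 : Polynomial ℚ)) * (phi (v 0) * phi (v 1) * phi (v 2 - 1) * phi (v 3) * phi (v 4 - 1) * phi (v 5))) + ((v 4 : Polynomial ℚ)) * (((v 3 : Polynomial ℚ)) * (phi (v 0) * phi (v 1) * phi (v 2) * phi (v 3 - 1) * phi (v 4 - 1) * phi (v 5))) + ((v 4 : Polynomial ℚ)) * (((v 5 : Polynomial ℚ)) * (phi (v 0) * phi (v 1) * phi (v 2) * phi (v 3) * phi (v 4 - 1) * phi (v 5 - 1))) + ((v 5 : Polynomial ℚ))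 * (((v 0 : Polynomial ℚ)) * (phi (v 0 - 1) * phi (v 1) * phi (v 2) * phi (v 3) * phi (v 4) * phi (v 5 - 1))) + ((v 5 : Polynomial ℚ)) * (((v 1 : Polynomial ℚ)) * (phi (v 0) * phi (v 1 - 1) * phi (v 2) * phi (v 3) * phi (v 4) * phi (v 5 - 1))) + ((v 5 : Polynomial ℚ)) * (((v 2 : Polynomial ℚ)) * (phi (v 0) * phi (v 1) * phi (v 2 - 1) * phi (v 3) * phi (v 4) * phi (v 5 - 1))) + ((v 5 : Polynomial ℚ)) * (((v 3 : Polynomial ℚ)) * (phi (v 0) * phi (v 1) * phi (v 2) * phi (v 3 - 1) * phi (v 4) * phi (v 5 - 1))) + ((v 5 : Polynomial ℚ)) * (((v 4 : Polynomial ℚ)) * (phi (v 0) * phi (v 1) * phi (v 2) * phi (v 3) * phi (v 4 - 1) * phi (v 5 - 1))) := by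
    simp only [derivative_add, derivative_mul, derivative_natCast, dphi', C_eq_natCast,
      show ∀ x : ℕ, x - 1 - 1 = x - 2 from fun x => by omega]
    ring
  have hx : X * (((v 0 : Polynomial ℚ)) * (phi (v 0 - 1) * phi (v 1) * phi (v 2) * phi (v 3) * phi (v 4) * phi (v 5)) + ((v 1 : Polynomial ℚ)) * (phi (v 0) * phi (v 1 - 1) * phi (v 2) * phi (v 3) * phi (v 4) * phi (v 5)) + ((v 2 : Polynomial ℚ)) * (phi (v 0) * phi (v 1) * phi (v 2 - 1) * phi (v 3) * phi (v 4) * phi (v 5)) + ((v 3 : Polynomial ℚ)) * (phi (v 0) * phi (v 1) * phi (v 2) * phi (v 3 - 1) * phi (v 4) * phi (v 5)) + ((v 4 : Polynomial ℚ)) * (phi (v 0) * phi (v 1) * phi (v 2) * phi (v 3) * phi (v 4 - 1) * phi (v 5)) + ((v 5 : Polynomial ℚ)) * (phi (v 0) * phi (v 1) * phi (v 2) * phi (v 3) * phi (v 4) * phi (v 5 - 1))) = (((v 0 : Polynomial ℚ)) * (phi (v 0) * phi (v 1) * phi (v 2) * phi (v 3) * phi (v 4) * phi (v 5)) + ((v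 1 : Polynomial ℚ)) * (phi (v 0) * phi (v 1) * phi (v 2) * phi (v 3) * phi (v 4) * phi (v 5)) + ((v 2 : Polynomial ℚ)) * (phi (v 0) * phi (v 1) * phi (v 2) * phi (v 3) * phi (v 4) * phi (v 5)) + ((v 3 : Polynomial ℚ)) * (phi (v 0) * phi (v 1) * phi (v 2) * phi (v 3) * phi (v 4) * phi (v 5)) + ((v 4 : Polynomial ℚ)) * (phi (v 0) * phi (v 1) * phi (v 2) * phi (v 3) * phi (v 4) * phi (v 5)) + ((v 5 : Polynomial ℚ)) * (phi (v 0) * phi (v 1) * phi (v 2) * phi (v 3) * phi (v 4) * phi (v 5))) - (((v 0 : Polynomial ℚ)) * (((v 0 - 1 : ℕ) : Polynomial ℚ) * (phi (v 0 - 2) * phi (v 1) * phi (v 2) * phi (v 3) * phi (v 4) * phi (v 5))) + ((v 1 : Polynomial ℚ)) * (((v 1 - 1 : ℕ) : Polynomial ℚ) * (phi (v 0) * phi (v 1 - 2) * phi (v 2) * phi (v 3) * phi (v 4) * phi (v 5))) + ((v 2 : Polynomial ℚ)) * (((v 2 - 1 : ℕ) : Polynomial ℚ) * (phi (v 0) *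 phi (v 1) * phi (v 2 - 2) * phi (v 3) * phi (v 4) * phi (v 5))) + ((v 3 : Polynomial ℚ)) * (((v 3 - 1 : ℕ) : Polynomial ℚ) * (phi (v 0) * phi (v 1) * phi (v 2) * phi (v 3 - 2) * phi (v 4) * phi (v 5))) + ((v 4 : Polynomial ℚ)) * (((v 4 - 1 : ℕ) : Polynomial ℚ) * (phi (v 0) * phi (v 1) * phi (v 2) * phi (v 3) * phi (v 4 - 2) * phi (v 5))) + ((v 5 : Polynomial ℚ)) * (((v 5 - 1 : ℕ) : Polynomial ℚ) * (phi (v 0) * phi (v 1) * phi (v 2) * phi (v 3) * phi (v 4) * phi (v 5 - 2)))) := by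
    linear_combination (phi (v 1) * phi (v 2) * phi (v 3) * phi (v 4) * phi (v 5)) * lemGX (v 0) + (phi (v 0) * phi (v 2) * phi (v 3) * phi (v 4) * phi (v 5)) * lemGX (v 1) + (phi (v 0) * phi (v 1) * phi (v 3) * phi (v 4) * phi (v 5)) * lemGX (v 2) + (phi (v 0) * phi (v 1) * phi (v 2) * phi (v 4) * phi (v 5)) * lemGX (v 3) + (phi (v 0) * phi (v 1) * phi (v 2) * phi (v 3) * phi (v 5)) * lemGX (v 4) + (phi (v 0) * phi (v 1) * phi (v 2) * phi (v 3) * phi (v 4)) * lemGX (v 5)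
  rw [hx, hd] at st
  simp only [L_add, L_sub, L_natCast_mul] at st
  rw [show ((∑ j, v j : ℕ)) = v 0 + v 1 + v 2 + v 3 + v 4 + v 5 from by
    simp [Fin.sum_univ_six]]
  simp only [Fin.sum_univ_succ, Fin.sum_univ_zero, kap, Fin.prod_univ_six,
    encNv_0_0, encNv_0_1, encNv_0_2, encNv_0_3, encNv_0_4, encNv_0_5, encNv_1_0, encNv_1_1, encNv_1_2, encNv_1_3, encNv_1_4, encNv_1_5, encNv_2_0, encNv_2_1, encNv_2_2, encNv_2_3, encNv_2_4, encNv_2_5, encNv_3_0, encNv_3_1, encNv_3_2, encNv_3_3, encNv_3_4, encNv_3_5, encNv_4_0, encNv_4_1, encNv_4_2, encNv_4_3, encNv_4_4, encNv_4_5, encNv_5_0, encNv_5_1, encNv_5_2, encNv_5_3, encNv_5_4, encNv_5_5, encNv_6_0, encNv_6_1, encNv_6_2, encNv_6_3, encNv_6_4, encNv_6_5, encNv_7_0, encNv_7_1, encNv_7_2, encNv_7_3, encNv_7_4, encNv_7_5, encNv_8_0, encNv_8_1, encNv_8_2, encNv_8_3, encNv_8_4, encNv_8_5, encNv_9_0,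 encNv_9_1, encNv_9_2, encNv_9_3, encNv_9_4, encNv_9_5, encNv_10_0, encNv_10_1, encNv_10_2, encNv_10_3, encNv_10_4, encNv_10_5, encNv_11_0, encNv_11_1, encNv_11_2, encNv_11_3, encNv_11_4, encNv_11_5, encNv_12_0, encNv_12_1, encNv_12_2, encNv_12_3, encNv_12_4, encNv_12_5, encNv_13_0, encNv_13_1, encNv_13_2, encNv_13_3, encNv_13_4, encNv_13_5, encNv_14_0, encNv_14_1, encNv_14_2, encNv_14_3, encNv_14_4, encNv_14_5, encNv_15_0, encNv_15_1, encNv_15_2, encNv_15_3, encNv_15_4, encNv_15_5, encNv_16_0, encNv_16_1, encNv_16_2, encNv_16_3, encNv_16_4, encNv_16_5, encNv_17_0, encNv_17_1, encNv_17_2, encNv_17_3, encNv_17_4, encNv_17_5, encNv_18_0, encNv_18_1, encNv_18_2, encNv_18_3, encNv_18_4, encNv_18_5, encNv_19_0, encNv_19_1, encNv_19_2, encNv_19_3, encNv_19_4, encNv_19_5, encNv_20_0, encNv_20_1, encNv_20_2, encNv_20_3, encNv_20_4, encNv_20_5, dsc_0, dsc_1, dsc_2, Nat.sub_zero, one_mul,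 mul_one, add_zero]
  push_cast
  linear_combination -st

theorem count : ∀ (m : ℕ) (v : Fin 6 → ℕ), (∑ j, v j) = 2*m →
    (G v m : ℚ) * ∏ j, (((v j).factorial : ℚ)) = (m.factorial : ℚ) * L (∏ j, phi (v j)) := by
  intro m
  induction m with
  | zero =>
      intro v hv
      have hz : ∀ j, v j = 0 := by
        intro j
        have h0 : ∑ j, v j = 0 := by simpa using hv
        exact Finset.sum_eq_zero_iff.mp h0 j (Finset.mem_univ j)
      have hG : G v 0 = 1 := by
        rw [show G v 0 = Nat.card (MatT v 0) from rfl]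
        have hu : Unique (MatT v 0) := {
          default := ⟨fun i => i.elim0, fun i => i.elim0, fun j => by simp [hz j]⟩
          uniq := by rintro ⟨M, hM⟩; apply Subtype.ext; funext i; exact i.elim0 }
        simp [Nat.card_unique]
      simp only [hG, hz]
      norm_num [phi, L_one]
  | succ m ih =>
      intro v hv
      have perq : ∀ q : Fin 21, (Fib v m q : ℚ) * ∏ j, (((v j).factorial : ℚ)) =
          kap v q * ((m.factorial : ℚ) * L (∏ j, phi (v j - encN q j))) := by
        intro q
        rw [Fib_eval']
        split_ifs with hg
        · have hsum : (∑ j, (v j - encN q j)) = 2*m := by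
            have h1 : (∑ j, (v j - encN q j)) + ∑ j, encN q j = ∑ j, v j := by
              rw [← Finset.sum_add_distrib]
              apply Finset.sum_congr rfl
              intro j _
              have := hg j; omega
            have h2 := encN_sum q
            omega
          have hIH := ih (fun j => v j - encN q j) hsum
          have hfac : (∏ j, (((v j).factorial : ℚ))) =
              kap v q * ∏ j, ((((v j - encN q j).factorial : ℚ))) := by
            rw [kap, ← Finset.prod_mul_distrib]
            apply Finset.prod_congr rfl
            intro j _
            exact fact_dsc (v j) (encN q j) (encN_le q j) (hg j)
          rw [hfac]
          push_cast
          push_cast at hIH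
          linear_combination kap v q * hIH
        · have hk : kap v q = 0 := by
            push_neg at hg
            obtain ⟨j, hj⟩ := hg
            rw [kap]
            exact Finset.prod_eq_zero (Finset.mem_univ j) (dsc_zero _ _ (encN_le q j) hj)
          simp [hk]
      have h1 : (G v (m+1) : ℚ) = ∑ q : Fin 21, (Fib v m q : ℚ) := by
        rw [G_peel]; push_cast; ring
      have h2 : (G v (m+1) : ℚ) * ∏ j, (((v j).factorial : ℚ)) =
          (m.factorial : ℚ) * ∑ q : Fin 21, kap v q * L (∏ j, phi (v j - encN q j)) := by
        rw [h1, Finset.sum_mul, Finset.mul_sum]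
        apply Finset.sum_congr rfl
        intro q _
        rw [perq q]; ring
      have hk := key v
      rw [hv] at hk
      rw [h2, Nat.factorial_succ]
      push_cast
      push_cast at hk
      linear_combination ((m.factorial : ℚ)) / 2 * hk

set_option maxHeartbeats 1600000 in
lemma step2 (n : ℕ) :
    ((1 : ℚ)) * L (phi (n+2) ^ 2 * phi (n+1) ^ 4) = (21 + 42*(n:ℚ) + 21*(n:ℚ)^2) * L (phi (n+1) ^ 4 * phi n ^ 2) + (5 + 4*(n:ℚ)) * L (phi (n+1) ^ 6) := by
  have hA : phi (n+2) = X * phi (n+1) + ((n:Polynomial ℚ)+1) * phi n := by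
    rw [show phi (n+2) = X * phi (n+1) + derivative (phi (n+1)) from rfl, dphi]
    rw [C_add, C_1, C_eq_natCast]
  have hA' : derivative (phi (n+1)) = ((n:Polynomial ℚ)+1) * phi n := by
    rw [dphi, C_add, C_1, C_eq_natCast]
  have hB : derivative (phi n) = phi (n+1) - X * phi n := dphi0 n
  have hd : derivative (C (4 + 4*(n:ℚ)) * (phi (n+1) ^ 5 * phi n ^ 1) + C (1) * (X ^ 1 * phi (n+1) ^ 6)) = C (20 + 40*(n:ℚ) + 20*(n:ℚ)^2) * (phi (n+1) ^ 4 * phi n ^ 2) + C (5 + 4*(n:ℚ)) * (phi (n+1) ^ 6) + C (2 + 2*(n:ℚ)) * (X ^ 1 * phi (n+1) ^ 5 * phi n ^ 1) := by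
    simp only [derivative_add, derivative_sub, derivative_mul, derivative_pow, derivative_X,
      derivative_C, derivative_one, derivative_natCast, hA', hB]
    simp only [map_add, map_sub, map_mul, map_pow, map_neg, map_ofNat, C_eq_natCast, C_1, map_one]
    push_cast
    ring
  have hst := stein (C (4 + 4*(n:ℚ)) * (phi (n+1) ^ 5 * phi n ^ 1) + C (1) * (X ^ 1 * phi (n+1) ^ 6))
  rw [hd] at hst
  have hpoly : C ((1 : ℚ)) * ((X * phi (n+1) + ((n:Polynomial ℚ)+1) * phi n) ^ 2 * phi (n+1) ^ 4)
      = (C (21 + 42*(n:ℚ) + 21*(n:ℚ)^2) * (phi (n+1) ^ 4 * phi n ^ 2) + C (5 + 4*(n:ℚ)) * (phi (n+1) ^ 6)) + (X * (C (4 + 4*(n:ℚ)) * (phi (n+1) ^ 5 * phi n ^ 1) + C (1) * (X ^ 1 * phi (n+1) ^ 6)) - (C (20 + 40*(n:ℚ) + 20*(n:ℚ)^2) * (phi (n+1) ^ 4 * phi n ^ 2) + C (5 + 4*(n:ℚ)) * (phi (n+1) ^ 6) + C (2 + 2*(n:ℚ)) * (X ^ 1 * phi (n+1) ^ 5 * phi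 n ^ 1))) := by
    simp only [map_add, map_sub, map_mul, map_pow, map_neg, map_ofNat, C_eq_natCast, C_1, map_one]
    push_cast
    ring
  have hm := congrArg L hpoly
  simp only [L_add, L_sub, L_Cmul] at hm hst
  rw [hA]
  linear_combination hm + hst


set_option maxHeartbeats 1600000 in
lemma step4 (n : ℕ) :
    ((3 : ℚ)) * L (phi (n+2) ^ 4 * phi (n+1) ^ 2) = (105 + 420*(n:ℚ) + 630*(n:ℚ)^2 + 420*(n:ℚ)^3 + 105*(n:ℚ)^4) * L (phi (n+1) ^ 2 * phi n ^ 4) + (723 + 1928*(n:ℚ) + 1687*(n:ℚ)^2 + 482*(n:ℚ)^3) * L (phi (n+1) ^ 4 * phi n ^ 2) + (142 + 209*(n:ℚ) + 76*(n:ℚ)^2) * L (phi (n+1) ^ 6) := by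
  have hA : phi (n+2) = X * phi (n+1) + ((n:Polynomial ℚ)+1) * phi n := by
    rw [show phi (n+2) = X * phi (n+1) + derivative (phi (n+1)) from rfl, dphi]
    rw [C_add, C_1, C_eq_natCast]
  have hA' : derivative (phi (n+1)) = ((n:Polynomial ℚ)+1) * phi n := by
    rw [dphi, C_add, C_1, C_eq_natCast]
  have hB : derivative (phi n) = phi (n+1) - X * phi n := dphi0 n
  have hd : derivative (C (34 + 102*(n:ℚ) + 102*(n:ℚ)^2 + 34*(n:ℚ)^3) * (phi (n+1) ^ 3 * phi n ^ 3) + C (118 + 194*(n:ℚ) + 76*(n:ℚ)^2) * (phi (n+1) ^ 5 * phi n ^ 1) + C (31 + 62*(n:ℚ) + 31*(n:ℚ)^2) * (X ^ 1 * phi (n+1) ^ 4 * phi n ^ 2) + C (24 + 15*(n:ℚ)) * (X ^ 1 * phi (n+1) ^ 6) + C (15 + 15*(n:ℚ)) * (X ^ 2 * phi (n+1) ^ 5 * phi n ^ 1) + C (3) * (X ^ 3 * phi (n+1) ^ 6)) = C (102 + 408*(n:ℚ) + 612*(n:ℚ)^2 + 408*(n:ℚ)^3 + 102*(n:ℚ)^4)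 * (phi (n+1) ^ 2 * phi n ^ 4) + C (723 + 1928*(n:ℚ) + 1687*(n:ℚ)^2 + 482*(n:ℚ)^3) * (phi (n+1) ^ 4 * phi n ^ 2) + C (142 + 209*(n:ℚ) + 76*(n:ℚ)^2) * (phi (n+1) ^ 6) + C (22 + 66*(n:ℚ) + 66*(n:ℚ)^2 + 22*(n:ℚ)^3) * (X ^ 1 * phi (n+1) ^ 3 * phi n ^ 3) + C (118 + 194*(n:ℚ) + 76*(n:ℚ)^2) * (X ^ 1 * phi (n+1) ^ 5 * phi n ^ 1) + C (13 + 26*(n:ℚ) + 13*(n:ℚ)^2) * (X ^ 2 * phi (n+1) ^ 4 * phi n ^ 2) + C (24 + 15*(n:ℚ)) * (X ^ 2 * phi (n+1) ^ 6) + C (3 + 3*(n:ℚ)) * (X ^ 3 * phi (n+1) ^ 5 * phi n ^ 1) := by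
    simp only [derivative_add, derivative_sub, derivative_mul, derivative_pow, derivative_X,
      derivative_C, derivative_one, derivative_natCast, hA', hB]
    simp only [map_add, map_sub, map_mul, map_pow, map_neg, map_ofNat, C_eq_natCast, C_1, map_one]
    push_cast
    ring
  have hst := stein (C (34 + 102*(n:ℚ) + 102*(n:ℚ)^2 + 34*(n:ℚ)^3) * (phi (n+1) ^ 3 * phi n ^ 3) + C (118 + 194*(n:ℚ) + 76*(n:ℚ)^2) * (phi (n+1) ^ 5 * phi n ^ 1) + C (31 + 62*(n:ℚ) + 31*(n:ℚ)^2) * (X ^ 1 * phi (n+1) ^ 4 * phi n ^ 2) + C (24 + 15*(n:ℚ)) * (X ^ 1 * phi (n+1) ^ 6) + C (15 + 15*(n:ℚ)) * (X ^ 2 * phi (n+1) ^ 5 * phi n ^ 1) + C (3) * (X ^ 3 * phi (n+1) ^ 6))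
  rw [hd] at hst
  have hpoly : C ((3 : ℚ)) * ((X * phi (n+1) + ((n:Polynomial ℚ)+1) * phi n) ^ 4 * phi (n+1) ^ 2)
      = (C (105 + 420*(n:ℚ) + 630*(n:ℚ)^2 + 420*(n:ℚ)^3 + 105*(n:ℚ)^4) * (phi (n+1) ^ 2 * phi n ^ 4) + C (723 + 1928*(n:ℚ) + 1687*(n:ℚ)^2 + 482*(n:ℚ)^3) * (phi (n+1) ^ 4 * phi n ^ 2) + C (142 + 209*(n:ℚ) + 76*(n:ℚ)^2) * (phi (n+1) ^ 6)) + (X * (C (34 + 102*(n:ℚ) + 102*(n:ℚ)^2 + 34*(n:ℚ)^3) * (phi (n+1) ^ 3 * phi n ^ 3) + C (118 + 194*(n:ℚ) + 76*(n:ℚ)^2) * (phi (n+1) ^ 5 * phi n ^ 1) + C (31 + 62*(n:ℚ) + 31*(n:ℚ)^2) * (X ^ 1 * phi (n+1) ^ 4 * phi n ^ 2) + C (24 + 15*(n:ℚ)) * (X ^ 1 * phi (n+1) ^ 6) + C (15 + 15*(n:ℚ)) * (X ^ 2 * phi (n+1) ^ 5 * phi n ^ 1) + C (3) * (X ^ 3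 * phi (n+1) ^ 6)) - (C (102 + 408*(n:ℚ) + 612*(n:ℚ)^2 + 408*(n:ℚ)^3 + 102*(n:ℚ)^4) * (phi (n+1) ^ 2 * phi n ^ 4) + C (723 + 1928*(n:ℚ) + 1687*(n:ℚ)^2 + 482*(n:ℚ)^3) * (phi (n+1) ^ 4 * phi n ^ 2) + C (142 + 209*(n:ℚ) + 76*(n:ℚ)^2) * (phi (n+1) ^ 6) + C (22 + 66*(n:ℚ) + 66*(n:ℚ)^2 + 22*(n:ℚ)^3) * (X ^ 1 * phi (n+1) ^ 3 * phi n ^ 3) + C (118 + 194*(n:ℚ) + 76*(n:ℚ)^2) * (X ^ 1 * phi (n+1) ^ 5 * phi n ^ 1) + C (13 + 26*(n:ℚ) + 13*(n:ℚ)^2) * (X ^ 2 * phi (n+1) ^ 4 * phi n ^ 2) + C (24 + 15*(n:ℚ)) * (X ^ 2 * phi (n+1) ^ 6) + C (3 + 3*(n:ℚ)) * (X ^ 3 * phi (n+1) ^ 5 * phi n ^ 1))) := by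
    simp only [map_add, map_sub, map_mul, map_pow, map_neg, map_ofNat, C_eq_natCast, C_1, map_one]
    push_cast
    ring
  have hm := congrArg L hpoly
  simp only [L_add, L_sub, L_Cmul] at hm hst
  rw [hA]
  linear_combination hm + hst


set_option maxHeartbeats 1600000 in
lemma step6 (n : ℕ) :
    ((1 : ℚ)) * L (phi (n+2) ^ 6) = (7 + 42*(n:ℚ) + 105*(n:ℚ)^2 + 140*(n:ℚ)^3 + 105*(n:ℚ)^4 + 42*(n:ℚ)^5 + 7*(n:ℚ)^6) * L (phi n ^ 6) + (525 + 2400*(n:ℚ) + 4350*(n:ℚ)^2 + 3900*(n:ℚ)^3 + 1725*(n:ℚ)^4 + 300*(n:ℚ)^5) * L (phi (n+1) ^ 2 * phi n ^ 4) + (2985 + 9675*(n:ℚ) + 11535*(n:ℚ)^2 + 5985*(n:ℚ)^3 + 1140*(n:ℚ)^4) * L (phi (n+1) ^ 4 * phi n ^ 2) + (567 + 1161*(n:ℚ) + 783*(n:ℚ)^2 + 174*(n:ℚ)^3) * L (phi (n+1) ^ 6) := by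
  have hA : phi (n+2) = X * phi (n+1) + ((n:Polynomial ℚ)+1) * phi n := by
    rw [show phi (n+2) = X * phi (n+1) + derivative (phi (n+1)) from rfl, dphi]
    rw [C_add, C_1, C_eq_natCast]
  have hA' : derivative (phi (n+1)) = ((n:Polynomial ℚ)+1) * phi n := by
    rw [dphi, C_add, C_1, C_eq_natCast]
  have hB : derivative (phi n) = phi (n+1) - X * phi n := dphi0 n
  have hd : derivative (C (6 + 30*(n:ℚ) + 60*(n:ℚ)^2 + 60*(n:ℚ)^3 + 30*(n:ℚ)^4 + 6*(n:ℚ)^5) * (phi (n+1) ^ 1 * phi n ^ 5) + C (160 + 570*(n:ℚ) + 750*(n:ℚ)^2 + 430*(n:ℚ)^3 + 90*(n:ℚ)^4) * (phi (n+1) ^ 3 * phi n ^ 3) + C (474 + 1050*(n:ℚ) + 750*(n:ℚ)^2 + 174*(n:ℚ)^3) * (phi (n+1) ^ 5 * phi n ^ 1) + C (15 + 60*(n:ℚ) + 90*(n:ℚ)^2 + 60*(n:ℚ)^3 + 15*(n:ℚ)^4) * (X ^ 1 * phi (n+1) ^ 2 * phi n ^ 4) + C (135 + 345*(n:ℚ)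 + 285*(n:ℚ)^2 + 75*(n:ℚ)^3) * (X ^ 1 * phi (n+1) ^ 4 * phi n ^ 2) + C (93 + 111*(n:ℚ) + 33*(n:ℚ)^2) * (X ^ 1 * phi (n+1) ^ 6) + C (20 + 60*(n:ℚ) + 60*(n:ℚ)^2 + 20*(n:ℚ)^3) * (X ^ 2 * phi (n+1) ^ 3 * phi n ^ 3) + C (60 + 93*(n:ℚ) + 33*(n:ℚ)^2) * (X ^ 2 * phi (n+1) ^ 5 * phi n ^ 1) + C (15 + 30*(n:ℚ) + 15*(n:ℚ)^2) * (X ^ 3 * phi (n+1) ^ 4 * phi n ^ 2) + C (11 + 6*(n:ℚ)) * (X ^ 3 * phi (n+1) ^ 6) + C (6 + 6*(n:ℚ)) * (X ^ 4 * phi (n+1) ^ 5 * phi n ^ 1) + C (1) * (X ^ 5 * phi (n+1) ^ 6)) = C (6 + 36*(n:ℚ) + 90*(n:ℚ)^2 + 120*(n:ℚ)^3 + 90*(n:ℚ)^4 + 36*(n:ℚ)^5 + 6*(n:ℚ)^6) * (phi n ^ 6) + C (525 + 2400*(n:ℚ) + 4350*(n:ℚ)^2 + 3900*(n:ℚ)^3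 + 1725*(n:ℚ)^4 + 300*(n:ℚ)^5) * (phi (n+1) ^ 2 * phi n ^ 4) + C (2985 + 9675*(n:ℚ) + 11535*(n:ℚ)^2 + 5985*(n:ℚ)^3 + 1140*(n:ℚ)^4) * (phi (n+1) ^ 4 * phi n ^ 2) + C (567 + 1161*(n:ℚ) + 783*(n:ℚ)^2 + 174*(n:ℚ)^3) * (phi (n+1) ^ 6) + C (160 + 570*(n:ℚ) + 750*(n:ℚ)^2 + 430*(n:ℚ)^3 + 90*(n:ℚ)^4) * (X ^ 1 * phi (n+1) ^ 3 * phi n ^ 3) + C (474 + 1050*(n:ℚ) + 750*(n:ℚ)^2 + 174*(n:ℚ)^3) * (X ^ 1 * phi (n+1) ^ 5 * phi n ^ 1) + C (135 + 345*(n:ℚ) + 285*(n:ℚ)^2 + 75*(n:ℚ)^3) * (X ^ 2 * phi (n+1) ^ 4 * phi n ^ 2) + C (93 + 111*(n:ℚ) + 33*(n:ℚ)^2) * (X ^ 2 * phi (n+1) ^ 6) + C (60 + 93*(n:ℚ) + 33*(n:ℚ)^2) * (X ^ 3 * phi (n+1) ^ 5 * phi n ^ 1) + C (11 + 6*(n:ℚ))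 * (X ^ 4 * phi (n+1) ^ 6) := by
    simp only [derivative_add, derivative_sub, derivative_mul, derivative_pow, derivative_X,
      derivative_C, derivative_one, derivative_natCast, hA', hB]
    simp only [map_add, map_sub, map_mul, map_pow, map_neg, map_ofNat, C_eq_natCast, C_1, map_one]
    push_cast
    ring
  have hst := stein (C (6 + 30*(n:ℚ) + 60*(n:ℚ)^2 + 60*(n:ℚ)^3 + 30*(n:ℚ)^4 + 6*(n:ℚ)^5) * (phi (n+1) ^ 1 * phi n ^ 5) + C (160 + 570*(n:ℚ) + 750*(n:ℚ)^2 + 430*(n:ℚ)^3 + 90*(n:ℚ)^4) * (phi (n+1) ^ 3 * phi n ^ 3) + C (474 + 1050*(n:ℚ) + 750*(n:ℚ)^2 + 174*(n:ℚ)^3) * (phi (n+1) ^ 5 * phi n ^ 1) + C (15 + 60*(n:ℚ) + 90*(n:ℚ)^2 + 60*(n:ℚ)^3 + 15*(n:ℚ)^4) * (X ^ 1 * phi (n+1) ^ 2 * phi n ^ 4) + C (135 + 345*(n:ℚ) + 285*(n:ℚ)^2 + 75*(n:ℚ)^3) * (X ^ 1 * phi (n+1) ^ 4 * phi n ^ 2)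 + C (93 + 111*(n:ℚ) + 33*(n:ℚ)^2) * (X ^ 1 * phi (n+1) ^ 6) + C (20 + 60*(n:ℚ) + 60*(n:ℚ)^2 + 20*(n:ℚ)^3) * (X ^ 2 * phi (n+1) ^ 3 * phi n ^ 3) + C (60 + 93*(n:ℚ) + 33*(n:ℚ)^2) * (X ^ 2 * phi (n+1) ^ 5 * phi n ^ 1) + C (15 + 30*(n:ℚ) + 15*(n:ℚ)^2) * (X ^ 3 * phi (n+1) ^ 4 * phi n ^ 2) + C (11 + 6*(n:ℚ)) * (X ^ 3 * phi (n+1) ^ 6) + C (6 + 6*(n:ℚ)) * (X ^ 4 * phi (n+1) ^ 5 * phi n ^ 1) + C (1) * (X ^ 5 * phi (n+1) ^ 6))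
  rw [hd] at hst
  have hpoly : C ((1 : ℚ)) * ((X * phi (n+1) + ((n:Polynomial ℚ)+1) * phi n) ^ 6)
      = (C (7 + 42*(n:ℚ) + 105*(n:ℚ)^2 + 140*(n:ℚ)^3 + 105*(n:ℚ)^4 + 42*(n:ℚ)^5 + 7*(n:ℚ)^6) * (phi n ^ 6) + C (525 + 2400*(n:ℚ) + 4350*(n:ℚ)^2 + 3900*(n:ℚ)^3 + 1725*(n:ℚ)^4 + 300*(n:ℚ)^5) * (phi (n+1) ^ 2 * phi n ^ 4) + C (2985 + 9675*(n:ℚ) + 11535*(n:ℚ)^2 + 5985*(n:ℚ)^3 + 1140*(n:ℚ)^4) * (phi (n+1) ^ 4 * phi n ^ 2) + C (567 + 1161*(n:ℚ) + 783*(n:ℚ)^2 + 174*(n:ℚ)^3) * (phi (n+1) ^ 6)) + (X * (C (6 + 30*(n:ℚ) + 60*(n:ℚ)^2 + 60*(n:ℚ)^3 + 30*(n:ℚ)^4 + 6*(n:ℚ)^5) * (phi (n+1) ^ 1 * phi n ^ 5) + C (160 + 570*(n:ℚ) + 750*(n:ℚ)^2 + 430*(n:ℚ)^3 + 90*(n:ℚ)^4)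 * (phi (n+1) ^ 3 * phi n ^ 3) + C (474 + 1050*(n:ℚ) + 750*(n:ℚ)^2 + 174*(n:ℚ)^3) * (phi (n+1) ^ 5 * phi n ^ 1) + C (15 + 60*(n:ℚ) + 90*(n:ℚ)^2 + 60*(n:ℚ)^3 + 15*(n:ℚ)^4) * (X ^ 1 * phi (n+1) ^ 2 * phi n ^ 4) + C (135 + 345*(n:ℚ) + 285*(n:ℚ)^2 + 75*(n:ℚ)^3) * (X ^ 1 * phi (n+1) ^ 4 * phi n ^ 2) + C (93 + 111*(n:ℚ) + 33*(n:ℚ)^2) * (X ^ 1 * phi (n+1) ^ 6) + C (20 + 60*(n:ℚ) + 60*(n:ℚ)^2 + 20*(n:ℚ)^3) * (X ^ 2 * phi (n+1) ^ 3 * phi n ^ 3) + C (60 + 93*(n:ℚ) + 33*(n:ℚ)^2) * (X ^ 2 * phi (n+1) ^ 5 * phi n ^ 1) + C (15 + 30*(n:ℚ) + 15*(n:ℚ)^2) * (X ^ 3 * phi (n+1) ^ 4 * phi n ^ 2) + C (11 + 6*(n:ℚ)) * (X ^ 3 * phi (n+1) ^ 6) + C (6 + 6*(n:ℚ)) * (X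 ^ 4 * phi (n+1) ^ 5 * phi n ^ 1) + C (1) * (X ^ 5 * phi (n+1) ^ 6)) - (C (6 + 36*(n:ℚ) + 90*(n:ℚ)^2 + 120*(n:ℚ)^3 + 90*(n:ℚ)^4 + 36*(n:ℚ)^5 + 6*(n:ℚ)^6) * (phi n ^ 6) + C (525 + 2400*(n:ℚ) + 4350*(n:ℚ)^2 + 3900*(n:ℚ)^3 + 1725*(n:ℚ)^4 + 300*(n:ℚ)^5) * (phi (n+1) ^ 2 * phi n ^ 4) + C (2985 + 9675*(n:ℚ) + 11535*(n:ℚ)^2 + 5985*(n:ℚ)^3 + 1140*(n:ℚ)^4) * (phi (n+1) ^ 4 * phi n ^ 2) + C (567 + 1161*(n:ℚ) + 783*(n:ℚ)^2 + 174*(n:ℚ)^3) * (phi (n+1) ^ 6) + C (160 + 570*(n:ℚ) + 750*(n:ℚ)^2 + 430*(n:ℚ)^3 + 90*(n:ℚ)^4) * (X ^ 1 * phi (n+1) ^ 3 * phi n ^ 3) + C (474 + 1050*(n:ℚ) + 750*(n:ℚ)^2 + 174*(n:ℚ)^3) * (X ^ 1 * phi (n+1) ^ 5 * phi n ^ 1)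 + C (135 + 345*(n:ℚ) + 285*(n:ℚ)^2 + 75*(n:ℚ)^3) * (X ^ 2 * phi (n+1) ^ 4 * phi n ^ 2) + C (93 + 111*(n:ℚ) + 33*(n:ℚ)^2) * (X ^ 2 * phi (n+1) ^ 6) + C (60 + 93*(n:ℚ) + 33*(n:ℚ)^2) * (X ^ 3 * phi (n+1) ^ 5 * phi n ^ 1) + C (11 + 6*(n:ℚ)) * (X ^ 4 * phi (n+1) ^ 6))) := by
    simp only [map_add, map_sub, map_mul, map_pow, map_neg, map_ofNat, C_eq_natCast, C_1, map_one]
    push_cast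
    ring
  have hm := congrArg L hpoly
  simp only [L_add, L_sub, L_Cmul] at hm hst
  rw [hA]
  linear_combination hm + hst

lemma Brec (n : ℕ) :
    (765114925680 + 7633379990880*(n:ℚ) + 35147587368600*(n:ℚ)^2 + 99108895760280*(n:ℚ)^3 + 191503720083375*(n:ℚ)^4 + 268815614749920*(n:ℚ)^5 + 283529956035375*(n:ℚ)^6 + 229208877305100*(n:ℚ)^7 + 143538640099470*(n:ℚ)^8 + 69873893082000*(n:ℚ)^9 + 26358000576390*(n:ℚ)^10 + 7625717562960*(n:ℚ)^11 + 1659264738075*(n:ℚ)^12 + 262575033840*(n:ℚ)^13 + 28509448275*(n:ℚ)^14 + 1898196300*(n:ℚ)^15 + 58406040*(n:ℚ)^16) * L (phi n ^ 6) + (1411138577520 + 8319181834512*(n:ℚ) + 22508067559224*(n:ℚ)^2 + 36997300710032*(n:ℚ)^3 + 41214034748327*(n:ℚ)^4 + 32851364714307*(n:ℚ)^5 + 19273471690891*(n:ℚ)^6 + 8425511684059*(n:ℚ)^7 + 2744125408458*(n:ℚ)^8 + 657558333766*(n:ℚ)^9 + 112669021816*(n:ℚ)^10 + 13070919840*(n:ℚ)^11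 + 920132576*(n:ℚ)^12 + 29681696*(n:ℚ)^13) * L (phi (n+1) ^ 6) + (-414525527262 + -1659915001557*(n:ℚ) + -2970756020061*(n:ℚ)^2 + -3129356430489*(n:ℚ)^3 + -2148758307003*(n:ℚ)^4 + -1005002394648*(n:ℚ)^5 + -324278502996*(n:ℚ)^6 + -71281459902*(n:ℚ)^7 + -10216388490*(n:ℚ)^8 + -862173048*(n:ℚ)^9 + -32534832*(n:ℚ)^10) * L (phi (n+2) ^ 6) + (-2991586122 + -8487349821*(n:ℚ) + -10141503096*(n:ℚ)^2 + -6617561702*(n:ℚ)^3 + -2548427912*(n:ℚ)^4 + -579689880*(n:ℚ)^5 + -72183584*(n:ℚ)^6 + -3799136*(n:ℚ)^7) * L (phi (n+3) ^ 6) + (209034 + 413586*(n:ℚ) + 302247*(n:ℚ)^2 + 96492*(n:ℚ)^3 + 11352*(n:ℚ)^4) * L (phi (n+4) ^ 6) = 0 := by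
  have h0 := step2 n
  have h1 := step2 (n+1)
  simp only [show n+1+1 = n+2 by omega, show n+1+2 = n+3 by omega] at h1
  push_cast at h1
  have h2 := step4 n
  have h3 := step4 (n+1)
  simp only [show n+1+1 = n+2 by omega, show n+1+2 = n+3 by omega] at h3
  push_cast at h3
  have h4 := step6 n
  have h5 := step6 (n+1)
  simp only [show n+1+1 = n+2 by omega, show n+1+2 = n+3 by omega] at h5
  push_cast at h5
  have h6 := step6 (n+2)
  simp only [show n+2+1 = n+3 by omega, show n+2+2 = n+4 by omega] at h6
  push_cast at h6
  linear_combination ((-3279063967200 + -17051564480400*(n:ℚ) + -40392929725200*(n:ℚ)^2 + -57631576888200*(n:ℚ)^3 + -55153661680950*(n:ℚ)^4 + -37294236091725*(n:ℚ)^5 + -18269098894650*(n:ℚ)^6 + -6532047544050*(n:ℚ)^7 + -1691732492100*(n:ℚ)^8 + -309493432725*(n:ℚ)^9 + -37962507000*(n:ℚ)^10 + -2803092600*(n:ℚ)^11 + -94221600*(n:ℚ)^12)) * h0 + ((19048223250 + 68165181450*(n:ℚ) + 107314613775*(n:ℚ)^2 + 97594291800*(n:ℚ)^3 + 56528482500*(n:ℚ)^4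 + 21636991350*(n:ℚ)^5 + 5475444075*(n:ℚ)^6 + 883753200*(n:ℚ)^7 + 82585800*(n:ℚ)^8 + 3405600*(n:ℚ)^9)) * h1 + ((546510661200 + 2485642118400*(n:ℚ) + 5109572223000*(n:ℚ)^2 + 6265744090200*(n:ℚ)^3 + 5092431830325*(n:ℚ)^4 + 2880044562150*(n:ℚ)^5 + 1156482901350*(n:ℚ)^6 + 329700057750*(n:ℚ)^7 + 65394540225*(n:ℚ)^8 + 8594031600*(n:ℚ)^9 + 673457400*(n:ℚ)^10 + 23839200*(n:ℚ)^11)) * h2 + ((9378310410 + 29990740860*(n:ℚ) + 41397796575*(n:ℚ)^2 + 32228788815*(n:ℚ)^3 + 15486269715*(n:ℚ)^4 + 4706015505*(n:ℚ)^5 + 883753200*(n:ℚ)^6 + 93824280*(n:ℚ)^7 + 4313760*(n:ℚ)^8)) * h3 + ((-109302132240 + -434670062400*(n:ℚ) + -773531551800*(n:ℚ)^2 + -811130788440*(n:ℚ)^3 + -554983058385*(n:ℚ)^4 + -258875736210*(n:ℚ)^5 + -83367588150*(n:ℚ)^6 + -18301389750*(n:ℚ)^7 + -2620971045*(n:ℚ)^8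 + -221108580*(n:ℚ)^9 + -8343720*(n:ℚ)^10)) * h4 + ((-1442017080 + -4087590849*(n:ℚ) + -4879948701*(n:ℚ)^2 + -3181634861*(n:ℚ)^3 + -1224390851*(n:ℚ)^4 + -278370906*(n:ℚ)^5 + -34653872*(n:ℚ)^6 + -1823888*(n:ℚ)^7)) * h5 + ((209034 + 413586*(n:ℚ) + 302247*(n:ℚ)^2 + 96492*(n:ℚ)^3 + 11352*(n:ℚ)^4)) * h6

noncomputable def pdef0 : Polynomial ℤ := (Polynomial.C (765114925680 : ℤ) + Polynomial.C (7633379990880 : ℤ) * Polynomial.X + Polynomial.C (35147587368600 : ℤ) * Polynomial.X^2 + Polynomial.C (99108895760280 : ℤ) * Polynomial.X^3 + Polynomial.C (191503720083375 : ℤ) * Polynomial.X^4 + Polynomial.C (268815614749920 : ℤ) * Polynomial.X^5 + Polynomial.C (283529956035375 : ℤ) * Polynomial.X^6 + Polynomial.C (229208877305100 : ℤ) * Polynomial.X^7 + Polynomial.C (143538640099470 : ℤ) * Polynomial.X^8 + Polynomial.C (69873893082000 : ℤ) * Polynomial.X^9 + Polynomial.C (26358000576390 : ℤ) * Polynomial.X^10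 + Polynomial.C (7625717562960 : ℤ) * Polynomial.X^11 + Polynomial.C (1659264738075 : ℤ) * Polynomial.X^12 + Polynomial.C (262575033840 : ℤ) * Polynomial.X^13 + Polynomial.C (28509448275 : ℤ) * Polynomial.X^14 + Polynomial.C (1898196300 : ℤ) * Polynomial.X^15 + Polynomial.C (58406040 : ℤ) * Polynomial.X^16) * (Polynomial.C (3 : ℤ) * Polynomial.X + Polynomial.C (1 : ℤ)) * (Polynomial.C (3 : ℤ) * Polynomial.X + Polynomial.C (2 : ℤ)) * (Polynomial.C (3 : ℤ) * Polynomial.X + Polynomial.C (3 : ℤ)) * (Polynomial.C (3 : ℤ) * Polynomial.X + Polynomial.C (4 : ℤ)) * (Polynomial.C (3 : ℤ) * Polynomial.X + Polynomial.C (5 : ℤ)) * (Polynomial.C (3 : ℤ) * Polynomial.X + Polynomial.C (6 : ℤ)) * (Polynomial.C (3 : ℤ) * Polynomial.X + Polynomial.C (7 : ℤ)) * (Polynomial.C (3 : ℤ) * Polynomial.X + Polynomial.C (8 : ℤ)) * (Polynomial.C (3 : ℤ) * Polynomial.X + Polynomial.C (9 : ℤ)) * (Polynomial.C (3 : ℤ)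 * Polynomial.X + Polynomial.C (10 : ℤ)) * (Polynomial.C (3 : ℤ) * Polynomial.X + Polynomial.C (11 : ℤ)) * (Polynomial.C (3 : ℤ) * Polynomial.X + Polynomial.C (12 : ℤ))

noncomputable def pdef1 : Polynomial ℤ := (Polynomial.C (1411138577520 : ℤ) + Polynomial.C (8319181834512 : ℤ) * Polynomial.X + Polynomial.C (22508067559224 : ℤ) * Polynomial.X^2 + Polynomial.C (36997300710032 : ℤ) * Polynomial.X^3 + Polynomial.C (41214034748327 : ℤ) * Polynomial.X^4 + Polynomial.C (32851364714307 : ℤ) * Polynomial.X^5 + Polynomial.C (19273471690891 : ℤ) * Polynomial.X^6 + Polynomial.C (8425511684059 : ℤ) * Polynomial.X^7 + Polynomial.C (2744125408458 : ℤ) * Polynomial.X^8 + Polynomial.C (657558333766 : ℤ) * Polynomial.X^9 + Polynomial.C (112669021816 : ℤ) * Polynomial.X^10 + Polynomial.C (13070919840 : ℤ) * Polynomial.X^11 + Polynomial.C (920132576 : ℤ) * Polynomial.X^12 + Polynomial.C (29681696 : ℤ) * Polynomial.X^13) * (Polynomial.X + Polynomial.C (1 : ℤ))^6 * (Polynomial.C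 (3 : ℤ) * Polynomial.X + Polynomial.C (4 : ℤ)) * (Polynomial.C (3 : ℤ) * Polynomial.X + Polynomial.C (5 : ℤ)) * (Polynomial.C (3 : ℤ) * Polynomial.X + Polynomial.C (6 : ℤ)) * (Polynomial.C (3 : ℤ) * Polynomial.X + Polynomial.C (7 : ℤ)) * (Polynomial.C (3 : ℤ) * Polynomial.X + Polynomial.C (8 : ℤ)) * (Polynomial.C (3 : ℤ) * Polynomial.X + Polynomial.C (9 : ℤ)) * (Polynomial.C (3 : ℤ) * Polynomial.X + Polynomial.C (10 : ℤ)) * (Polynomial.C (3 : ℤ) * Polynomial.X + Polynomial.C (11 : ℤ)) * (Polynomial.C (3 : ℤ) * Polynomial.X + Polynomial.C (12 : ℤ))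

noncomputable def pdef2 : Polynomial ℤ := (Polynomial.C (-414525527262 : ℤ) + Polynomial.C (-1659915001557 : ℤ) * Polynomial.X + Polynomial.C (-2970756020061 : ℤ) * Polynomial.X^2 + Polynomial.C (-3129356430489 : ℤ) * Polynomial.X^3 + Polynomial.C (-2148758307003 : ℤ) * Polynomial.X^4 + Polynomial.C (-1005002394648 : ℤ) * Polynomial.X^5 + Polynomial.C (-324278502996 : ℤ) * Polynomial.X^6 + Polynomial.C (-71281459902 : ℤ) * Polynomial.X^7 + Polynomial.C (-10216388490 : ℤ) * Polynomial.X^8 + Polynomial.C (-862173048 : ℤ) * Polynomial.X^9 + Polynomial.C (-32534832 : ℤ) * Polynomial.X^10) * (Polynomial.X + Polynomial.C (1 : ℤ))^6 * (Polynomial.X + Polynomial.C (2 : ℤ))^6 * (Polynomial.C (3 : ℤ) * Polynomial.X + Polynomial.C (7 : ℤ)) * (Polynomial.C (3 : ℤ) * Polynomial.X + Polynomial.C (8 : ℤ)) * (Polynomial.C (3 : ℤ) * Polynomial.X + Polynomial.C (9 : ℤ)) * (Polynomial.C (3 : ℤ) * Polynomial.X + Polynomial.C (10 : ℤ)) * (Polynomial.C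 (3 : ℤ) * Polynomial.X + Polynomial.C (11 : ℤ)) * (Polynomial.C (3 : ℤ) * Polynomial.X + Polynomial.C (12 : ℤ))

noncomputable def pdef3 : Polynomial ℤ := (Polynomial.C (-2991586122 : ℤ) + Polynomial.C (-8487349821 : ℤ) * Polynomial.X + Polynomial.C (-10141503096 : ℤ) * Polynomial.X^2 + Polynomial.C (-6617561702 : ℤ) * Polynomial.X^3 + Polynomial.C (-2548427912 : ℤ) * Polynomial.X^4 + Polynomial.C (-579689880 : ℤ) * Polynomial.X^5 + Polynomial.C (-72183584 : ℤ) * Polynomial.X^6 + Polynomial.C (-3799136 : ℤ) * Polynomial.X^7) * (Polynomial.X + Polynomial.C (1 : ℤ))^6 * (Polynomial.X + Polynomial.C (2 : ℤ))^6 * (Polynomial.X + Polynomial.C (3 : ℤ))^6 * (Polynomial.C (3 : ℤ) * Polynomial.X + Polynomial.C (10 : ℤ)) * (Polynomial.C (3 : ℤ) * Polynomial.X + Polynomial.C (11 : ℤ)) * (Polynomial.C (3 : ℤ) * Polynomial.X + Polynomial.C (12 : ℤ))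

noncomputable def pdef4 : Polynomial ℤ := (Polynomial.C (209034 : ℤ) + Polynomial.C (413586 : ℤ) * Polynomial.X + Polynomial.C (302247 : ℤ) * Polynomial.X^2 + Polynomial.C (96492 : ℤ) * Polynomial.X^3 + Polynomial.C (11352 : ℤ) * Polynomial.X^4) * (Polynomial.X + Polynomial.C (1 : ℤ))^6 * (Polynomial.X + Polynomial.C (2 : ℤ))^6 * (Polynomial.X + Polynomial.C (3 : ℤ))^6 * (Polynomial.X + Polynomial.C (4 : ℤ))^6

noncomputable def pp : ℕ → Polynomial ℤ
  | 0 => pdef0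
  | 1 => pdef1
  | 2 => pdef2
  | 3 => pdef3
  | 4 => pdef4
  | _ => 0

lemma countA (m : ℕ) : ((G (fun _ => m) (3*m) : ℕ) : ℚ) * ((m.factorial : ℚ))^6 =
    (((3*m).factorial : ℚ)) * L (phi m ^ 6) := by
  have h := count (3*m) (fun _ => m) (by simp [Finset.sum_const]; ring)
  simpa [Finset.prod_const] using h

lemma haG (m : ℕ) : G (fun _ => m) (3*m) = a172671 m := rfl

lemma hev0 (n : ℕ) : (((pp 0).eval (n:ℤ) : ℤ) : ℚ) = (765114925680 + 7633379990880*(n:ℚ) + 35147587368600*(n:ℚ)^2 + 99108895760280*(n:ℚ)^3 + 191503720083375*(n:ℚ)^4 + 268815614749920*(n:ℚ)^5 + 283529956035375*(n:ℚ)^6 + 229208877305100*(n:ℚ)^7 + 143538640099470*(n:ℚ)^8 + 69873893082000*(n:ℚ)^9 + 26358000576390*(n:ℚ)^10 + 7625717562960*(n:ℚ)^11 + 1659264738075*(n:ℚ)^12 + 262575033840*(n:ℚ)^13 + 28509448275*(n:ℚ)^14 + 1898196300*(n:ℚ)^15 + 58406040*(n:ℚ)^16) * 1 * (3*(n:ℚ)+1)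 * (3*(n:ℚ)+2) * (3*(n:ℚ)+3) * (3*(n:ℚ)+4) * (3*(n:ℚ)+5) * (3*(n:ℚ)+6) * (3*(n:ℚ)+7) * (3*(n:ℚ)+8) * (3*(n:ℚ)+9) * (3*(n:ℚ)+10) * (3*(n:ℚ)+11) * (3*(n:ℚ)+12) := by
  simp only [pp, pdef0, Polynomial.eval_add, Polynomial.eval_mul, Polynomial.eval_pow,
    Polynomial.eval_C, Polynomial.eval_X]
  push_cast
  ring

lemma hfb0 (n : ℕ) : (((3*n+12).factorial : ℚ)) = ((3*n).factorial : ℚ) * (3*(n:ℚ)+1) * (3*(n:ℚ)+2) * (3*(n:ℚ)+3) * (3*(n:ℚ)+4) * (3*(n:ℚ)+5) * (3*(n:ℚ)+6) * (3*(n:ℚ)+7) * (3*(n:ℚ)+8) * (3*(n:ℚ)+9) * (3*(n:ℚ)+10) * (3*(n:ℚ)+11) * (3*(n:ℚ)+12) := by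
  rw [show 3*n+12 = 3*n+11+1 by omega, Nat.factorial_succ, show 3*n+11 = 3*n+10+1 by omega, Nat.factorial_succ, show 3*n+10 = 3*n+9+1 by omega, Nat.factorial_succ, show 3*n+9 = 3*n+8+1 by omega, Nat.factorial_succ, show 3*n+8 = 3*n+7+1 by omega, Nat.factorial_succ, show 3*n+7 = 3*n+6+1 by omega, Nat.factorial_succ, show 3*n+6 = 3*n+5+1 by omega, Nat.factorial_succ, show 3*n+5 = 3*n+4+1 by omega, Nat.factorial_succ, show 3*n+4 = 3*n+3+1 by omega, Nat.factorial_succ, show 3*n+3 = 3*n+2+1 by omega, Nat.factorial_succ, show 3*n+2 = 3*n+1+1 by omega, Nat.factorial_succ, show 3*n+1 = 3*n+0+1 by omega, Nat.factorial_succ]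
  push_cast
  ring

lemma hev1 (n : ℕ) : (((pp 1).eval (n:ℤ) : ℤ) : ℚ) = (1411138577520 + 8319181834512*(n:ℚ) + 22508067559224*(n:ℚ)^2 + 36997300710032*(n:ℚ)^3 + 41214034748327*(n:ℚ)^4 + 32851364714307*(n:ℚ)^5 + 19273471690891*(n:ℚ)^6 + 8425511684059*(n:ℚ)^7 + 2744125408458*(n:ℚ)^8 + 657558333766*(n:ℚ)^9 + 112669021816*(n:ℚ)^10 + 13070919840*(n:ℚ)^11 + 920132576*(n:ℚ)^12 + 29681696*(n:ℚ)^13) * ((n:ℚ)+1)^6 * (3*(n:ℚ)+4) * (3*(n:ℚ)+5) * (3*(n:ℚ)+6) * (3*(n:ℚ)+7) * (3*(n:ℚ)+8) * (3*(n:ℚ)+9) * (3*(n:ℚ)+10) * (3*(n:ℚ)+11) * (3*(n:ℚ)+12) := by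
  simp only [pp, pdef1, Polynomial.eval_add, Polynomial.eval_mul, Polynomial.eval_pow,
    Polynomial.eval_C, Polynomial.eval_X]
  push_cast
  ring

lemma hfa1 (n : ℕ) : ((((n+1)).factorial : ℚ))^6 = ((n.factorial : ℚ))^6 * ((n:ℚ)+1)^6 := by
  rw [show n+1 = n+0+1 by omega, Nat.factorial_succ]
  push_cast
  ring

lemma hfb1 (n : ℕ) : (((3*n+12).factorial : ℚ)) = ((3*n+3).factorial : ℚ) * (3*(n:ℚ)+4) * (3*(n:ℚ)+5) * (3*(n:ℚ)+6) * (3*(n:ℚ)+7) * (3*(n:ℚ)+8) * (3*(n:ℚ)+9) * (3*(n:ℚ)+10) * (3*(n:ℚ)+11) * (3*(n:ℚ)+12) := by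
  rw [show 3*n+12 = 3*n+11+1 by omega, Nat.factorial_succ, show 3*n+11 = 3*n+10+1 by omega, Nat.factorial_succ, show 3*n+10 = 3*n+9+1 by omega, Nat.factorial_succ, show 3*n+9 = 3*n+8+1 by omega, Nat.factorial_succ, show 3*n+8 = 3*n+7+1 by omega, Nat.factorial_succ, show 3*n+7 = 3*n+6+1 by omega, Nat.factorial_succ, show 3*n+6 = 3*n+5+1 by omega, Nat.factorial_succ, show 3*n+5 = 3*n+4+1 by omega, Nat.factorial_succ, show 3*n+4 = 3*n+3+1 by omega, Nat.factorial_succ]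
  push_cast
  ring

lemma hev2 (n : ℕ) : (((pp 2).eval (n:ℤ) : ℤ) : ℚ) = ((-414525527262) + (-1659915001557)*(n:ℚ) + (-2970756020061)*(n:ℚ)^2 + (-3129356430489)*(n:ℚ)^3 + (-2148758307003)*(n:ℚ)^4 + (-1005002394648)*(n:ℚ)^5 + (-324278502996)*(n:ℚ)^6 + (-71281459902)*(n:ℚ)^7 + (-10216388490)*(n:ℚ)^8 + (-862173048)*(n:ℚ)^9 + (-32534832)*(n:ℚ)^10) * ((n:ℚ)+1)^6 * ((n:ℚ)+2)^6 * (3*(n:ℚ)+7) * (3*(n:ℚ)+8) * (3*(n:ℚ)+9) * (3*(n:ℚ)+10) * (3*(n:ℚ)+11) * (3*(n:ℚ)+12) := by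
  simp only [pp, pdef2, Polynomial.eval_add, Polynomial.eval_mul, Polynomial.eval_pow,
    Polynomial.eval_C, Polynomial.eval_X]
  push_cast
  ring

lemma hfa2 (n : ℕ) : ((((n+2)).factorial : ℚ))^6 = ((n.factorial : ℚ))^6 * ((n:ℚ)+1)^6 * ((n:ℚ)+2)^6 := by
  rw [show n+2 = n+1+1 by omega, Nat.factorial_succ, show n+1 = n+0+1 by omega, Nat.factorial_succ]
  push_cast
  ring

lemma hfb2 (n : ℕ) : (((3*n+12).factorial : ℚ)) = ((3*n+6).factorial : ℚ) * (3*(n:ℚ)+7) * (3*(n:ℚ)+8) * (3*(n:ℚ)+9) * (3*(n:ℚ)+10) * (3*(n:ℚ)+11) * (3*(n:ℚ)+12) := by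
  rw [show 3*n+12 = 3*n+11+1 by omega, Nat.factorial_succ, show 3*n+11 = 3*n+10+1 by omega, Nat.factorial_succ, show 3*n+10 = 3*n+9+1 by omega, Nat.factorial_succ, show 3*n+9 = 3*n+8+1 by omega, Nat.factorial_succ, show 3*n+8 = 3*n+7+1 by omega, Nat.factorial_succ, show 3*n+7 = 3*n+6+1 by omega, Nat.factorial_succ]
  push_cast
  ring

lemma hev3 (n : ℕ) : (((pp 3).eval (n:ℤ) : ℤ) : ℚ) = ((-2991586122) + (-8487349821)*(n:ℚ) + (-10141503096)*(n:ℚ)^2 + (-6617561702)*(n:ℚ)^3 + (-2548427912)*(n:ℚ)^4 + (-579689880)*(n:ℚ)^5 + (-72183584)*(n:ℚ)^6 + (-3799136)*(n:ℚ)^7) * ((n:ℚ)+1)^6 * ((n:ℚ)+2)^6 * ((n:ℚ)+3)^6 * (3*(n:ℚ)+10) * (3*(n:ℚ)+11) * (3*(n:ℚ)+12) := by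
  simp only [pp, pdef3, Polynomial.eval_add, Polynomial.eval_mul, Polynomial.eval_pow,
    Polynomial.eval_C, Polynomial.eval_X]
  push_cast
  ring

lemma hfa3 (n : ℕ) : ((((n+3)).factorial : ℚ))^6 = ((n.factorial : ℚ))^6 * ((n:ℚ)+1)^6 * ((n:ℚ)+2)^6 * ((n:ℚ)+3)^6 := by
  rw [show n+3 = n+2+1 by omega, Nat.factorial_succ, show n+2 = n+1+1 by omega, Nat.factorial_succ, show n+1 = n+0+1 by omega, Nat.factorial_succ]
  push_cast
  ring

lemma hfb3 (n : ℕ) : (((3*n+12).factorial : ℚ)) = ((3*n+9).factorial : ℚ) * (3*(n:ℚ)+10) * (3*(n:ℚ)+11) * (3*(n:ℚ)+12) := by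
  rw [show 3*n+12 = 3*n+11+1 by omega, Nat.factorial_succ, show 3*n+11 = 3*n+10+1 by omega, Nat.factorial_succ, show 3*n+10 = 3*n+9+1 by omega, Nat.factorial_succ]
  push_cast
  ring

lemma hev4 (n : ℕ) : (((pp 4).eval (n:ℤ) : ℤ) : ℚ) = (209034 + 413586*(n:ℚ) + 302247*(n:ℚ)^2 + 96492*(n:ℚ)^3 + 11352*(n:ℚ)^4) * ((n:ℚ)+1)^6 * ((n:ℚ)+2)^6 * ((n:ℚ)+3)^6 * ((n:ℚ)+4)^6 * 1 := by
  simp only [pp, pdef4, Polynomial.eval_add, Polynomial.eval_mul, Polynomial.eval_pow,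
    Polynomial.eval_C, Polynomial.eval_X]
  push_cast
  ring

lemma hfa4 (n : ℕ) : ((((n+4)).factorial : ℚ))^6 = ((n.factorial : ℚ))^6 * ((n:ℚ)+1)^6 * ((n:ℚ)+2)^6 * ((n:ℚ)+3)^6 * ((n:ℚ)+4)^6 := by
  rw [show n+4 = n+3+1 by omega, Nat.factorial_succ, show n+3 = n+2+1 by omega, Nat.factorial_succ, show n+2 = n+1+1 by omega, Nat.factorial_succ, show n+1 = n+0+1 by omega, Nat.factorial_succ]
  push_cast
  ring

lemma keylem0 (n : ℕ) : (((pp 0).eval (n:ℤ) : ℤ) : ℚ) * ((a172671 n : ℕ) : ℚ) * ((n.factorial : ℚ))^6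
    = (765114925680 + 7633379990880*(n:ℚ) + 35147587368600*(n:ℚ)^2 + 99108895760280*(n:ℚ)^3 + 191503720083375*(n:ℚ)^4 + 268815614749920*(n:ℚ)^5 + 283529956035375*(n:ℚ)^6 + 229208877305100*(n:ℚ)^7 + 143538640099470*(n:ℚ)^8 + 69873893082000*(n:ℚ)^9 + 26358000576390*(n:ℚ)^10 + 7625717562960*(n:ℚ)^11 + 1659264738075*(n:ℚ)^12 + 262575033840*(n:ℚ)^13 + 28509448275*(n:ℚ)^14 + 1898196300*(n:ℚ)^15 + 58406040*(n:ℚ)^16) * (((3*n+12).factorial : ℚ)) * L (phi n ^ 6) := by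
  have hc := countA n
  rw [haG n] at hc
  rw [hev0]
  rw [hfb0]
  linear_combination ((765114925680 + 7633379990880*(n:ℚ) + 35147587368600*(n:ℚ)^2 + 99108895760280*(n:ℚ)^3 + 191503720083375*(n:ℚ)^4 + 268815614749920*(n:ℚ)^5 + 283529956035375*(n:ℚ)^6 + 229208877305100*(n:ℚ)^7 + 143538640099470*(n:ℚ)^8 + 69873893082000*(n:ℚ)^9 + 26358000576390*(n:ℚ)^10 + 7625717562960*(n:ℚ)^11 + 1659264738075*(n:ℚ)^12 + 262575033840*(n:ℚ)^13 + 28509448275*(n:ℚ)^14 + 1898196300*(n:ℚ)^15 + 58406040*(n:ℚ)^16) * (3*(n:ℚ)+1) * (3*(n:ℚ)+2) * (3*(n:ℚ)+3) * (3*(n:ℚ)+4) * (3*(n:ℚ)+5) * (3*(n:ℚ)+6) * (3*(n:ℚ)+7) * (3*(n:ℚ)+8) * (3*(n:ℚ)+9) * (3*(n:ℚ)+10) * (3*(n:ℚ)+11) * (3*(n:ℚ)+12)) * hc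

lemma keylem1 (n : ℕ) : (((pp 1).eval (n:ℤ) : ℤ) : ℚ) * ((a172671 (n+1) : ℕ) : ℚ) * ((n.factorial : ℚ))^6
    = (1411138577520 + 8319181834512*(n:ℚ) + 22508067559224*(n:ℚ)^2 + 36997300710032*(n:ℚ)^3 + 41214034748327*(n:ℚ)^4 + 32851364714307*(n:ℚ)^5 + 19273471690891*(n:ℚ)^6 + 8425511684059*(n:ℚ)^7 + 2744125408458*(n:ℚ)^8 + 657558333766*(n:ℚ)^9 + 112669021816*(n:ℚ)^10 + 13070919840*(n:ℚ)^11 + 920132576*(n:ℚ)^12 + 29681696*(n:ℚ)^13) * (((3*n+12).factorial : ℚ)) * L (phi (n+1) ^ 6) := by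
  have hc := countA (n+1)
  rw [haG (n+1)] at hc
  rw [show 3*((n+1)) = 3*n+3 by ring] at hc
  rw [hev1]
  rw [hfb1]
  linear_combination ((1411138577520 + 8319181834512*(n:ℚ) + 22508067559224*(n:ℚ)^2 + 36997300710032*(n:ℚ)^3 + 41214034748327*(n:ℚ)^4 + 32851364714307*(n:ℚ)^5 + 19273471690891*(n:ℚ)^6 + 8425511684059*(n:ℚ)^7 + 2744125408458*(n:ℚ)^8 + 657558333766*(n:ℚ)^9 + 112669021816*(n:ℚ)^10 + 13070919840*(n:ℚ)^11 + 920132576*(n:ℚ)^12 + 29681696*(n:ℚ)^13) * (3*(n:ℚ)+4) * (3*(n:ℚ)+5) * (3*(n:ℚ)+6) * (3*(n:ℚ)+7) * (3*(n:ℚ)+8) * (3*(n:ℚ)+9) * (3*(n:ℚ)+10) * (3*(n:ℚ)+11) * (3*(n:ℚ)+12)) * hc - ((1411138577520 + 8319181834512*(n:ℚ) + 22508067559224*(n:ℚ)^2 + 36997300710032*(n:ℚ)^3 + 41214034748327*(n:ℚ)^4 + 32851364714307*(n:ℚ)^5 + 19273471690891*(n:ℚ)^6 + 8425511684059*(n:ℚ)^7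 + 2744125408458*(n:ℚ)^8 + 657558333766*(n:ℚ)^9 + 112669021816*(n:ℚ)^10 + 13070919840*(n:ℚ)^11 + 920132576*(n:ℚ)^12 + 29681696*(n:ℚ)^13) * (3*(n:ℚ)+4) * (3*(n:ℚ)+5) * (3*(n:ℚ)+6) * (3*(n:ℚ)+7) * (3*(n:ℚ)+8) * (3*(n:ℚ)+9) * (3*(n:ℚ)+10) * (3*(n:ℚ)+11) * (3*(n:ℚ)+12) * ((a172671 (n+1) : ℕ) : ℚ)) * hfa1 n

lemma keylem2 (n : ℕ) : (((pp 2).eval (n:ℤ) : ℤ) : ℚ) * ((a172671 (n+2) : ℕ) : ℚ) * ((n.factorial : ℚ))^6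
    = ((-414525527262) + (-1659915001557)*(n:ℚ) + (-2970756020061)*(n:ℚ)^2 + (-3129356430489)*(n:ℚ)^3 + (-2148758307003)*(n:ℚ)^4 + (-1005002394648)*(n:ℚ)^5 + (-324278502996)*(n:ℚ)^6 + (-71281459902)*(n:ℚ)^7 + (-10216388490)*(n:ℚ)^8 + (-862173048)*(n:ℚ)^9 + (-32534832)*(n:ℚ)^10) * (((3*n+12).factorial : ℚ)) * L (phi (n+2) ^ 6) := by
  have hc := countA (n+2)
  rw [haG (n+2)] at hc
  rw [show 3*((n+2)) = 3*n+6 by ring] at hc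
  rw [hev2]
  rw [hfb2]
  linear_combination (((-414525527262) + (-1659915001557)*(n:ℚ) + (-2970756020061)*(n:ℚ)^2 + (-3129356430489)*(n:ℚ)^3 + (-2148758307003)*(n:ℚ)^4 + (-1005002394648)*(n:ℚ)^5 + (-324278502996)*(n:ℚ)^6 + (-71281459902)*(n:ℚ)^7 + (-10216388490)*(n:ℚ)^8 + (-862173048)*(n:ℚ)^9 + (-32534832)*(n:ℚ)^10) * (3*(n:ℚ)+7) * (3*(n:ℚ)+8) * (3*(n:ℚ)+9) * (3*(n:ℚ)+10) * (3*(n:ℚ)+11) * (3*(n:ℚ)+12)) * hc - (((-414525527262) + (-1659915001557)*(n:ℚ) + (-2970756020061)*(n:ℚ)^2 + (-3129356430489)*(n:ℚ)^3 + (-2148758307003)*(n:ℚ)^4 + (-1005002394648)*(n:ℚ)^5 + (-324278502996)*(n:ℚ)^6 + (-71281459902)*(n:ℚ)^7 + (-10216388490)*(n:ℚ)^8 + (-862173048)*(n:ℚ)^9 + (-32534832)*(n:ℚ)^10) * (3*(n:ℚ)+7) * (3*(n:ℚ)+8) * (3*(n:ℚ)+9) * (3*(n:ℚ)+10) * (3*(n:ℚ)+11)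 * (3*(n:ℚ)+12) * ((a172671 (n+2) : ℕ) : ℚ)) * hfa2 n

lemma keylem3 (n : ℕ) : (((pp 3).eval (n:ℤ) : ℤ) : ℚ) * ((a172671 (n+3) : ℕ) : ℚ) * ((n.factorial : ℚ))^6
    = ((-2991586122) + (-8487349821)*(n:ℚ) + (-10141503096)*(n:ℚ)^2 + (-6617561702)*(n:ℚ)^3 + (-2548427912)*(n:ℚ)^4 + (-579689880)*(n:ℚ)^5 + (-72183584)*(n:ℚ)^6 + (-3799136)*(n:ℚ)^7) * (((3*n+12).factorial : ℚ)) * L (phi (n+3) ^ 6) := by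
  have hc := countA (n+3)
  rw [haG (n+3)] at hc
  rw [show 3*((n+3)) = 3*n+9 by ring] at hc
  rw [hev3]
  rw [hfb3]
  linear_combination (((-2991586122) + (-8487349821)*(n:ℚ) + (-10141503096)*(n:ℚ)^2 + (-6617561702)*(n:ℚ)^3 + (-2548427912)*(n:ℚ)^4 + (-579689880)*(n:ℚ)^5 + (-72183584)*(n:ℚ)^6 + (-3799136)*(n:ℚ)^7) * (3*(n:ℚ)+10) * (3*(n:ℚ)+11) * (3*(n:ℚ)+12)) * hc - (((-2991586122) + (-8487349821)*(n:ℚ) + (-10141503096)*(n:ℚ)^2 + (-6617561702)*(n:ℚ)^3 + (-2548427912)*(n:ℚ)^4 + (-579689880)*(n:ℚ)^5 + (-72183584)*(n:ℚ)^6 + (-3799136)*(n:ℚ)^7) * (3*(n:ℚ)+10) * (3*(n:ℚ)+11) * (3*(n:ℚ)+12) * ((a172671 (n+3) : ℕ) : ℚ)) * hfa3 n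

lemma keylem4 (n : ℕ) : (((pp 4).eval (n:ℤ) : ℤ) : ℚ) * ((a172671 (n+4) : ℕ) : ℚ) * ((n.factorial : ℚ))^6
    = (209034 + 413586*(n:ℚ) + 302247*(n:ℚ)^2 + 96492*(n:ℚ)^3 + 11352*(n:ℚ)^4) * (((3*n+12).factorial : ℚ)) * L (phi (n+4) ^ 6) := by
  have hc := countA (n+4)
  rw [haG (n+4)] at hc
  rw [show 3*((n+4)) = 3*n+12 by ring] at hc
  rw [hev4]
  rw [show ((3*n+12).factorial : ℚ) = ((3*n+12).factorial : ℚ) from by norm_num]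
  linear_combination ((209034 + 413586*(n:ℚ) + 302247*(n:ℚ)^2 + 96492*(n:ℚ)^3 + 11352*(n:ℚ)^4) * 1) * hc - ((209034 + 413586*(n:ℚ) + 302247*(n:ℚ)^2 + 96492*(n:ℚ)^3 + 11352*(n:ℚ)^4) * 1 * ((a172671 (n+4) : ℕ) : ℚ)) * hfa4 n

lemma pp4_ne : pp 4 ≠ 0 := by
  intro h
  have h0 := congrArg (Polynomial.eval (0:ℤ)) h
  simp only [pp, pdef4, Polynomial.eval_add, Polynomial.eval_mul, Polynomial.eval_pow,
    Polynomial.eval_C, Polynomial.eval_X, Polynomial.eval_zero] at h0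
  norm_num at h0

end A172671

/-- The sequence `a172671` is D-finite: there are `r ≥ 1` and polynomials
`p₀, …, p_r ∈ ℤ[x]`, not all zero, with
`p₀(n)·a(n) + ⋯ + p_r(n)·a(n+r) = 0` for all `n ≥ 1`. -/
theorem stmt13 :
    ∃ (r : ℕ) (p : ℕ → Polynomial ℤ), 1 ≤ r ∧ (∃ i, i ≤ r ∧ p i ≠ 0) ∧
      ∀ n : ℕ, 1 ≤ n →
        ∑ i ∈ Finset.range (r + 1), (p i).eval (n : ℤ) * (a172671 (n + i) : ℤ) = 0 := by
  refine ⟨4, A172671.pp, by norm_num, ⟨4, by norm_num, A172671.pp4_ne⟩, ?_⟩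
  intro n hn
  have k0 := A172671.keylem0 n
  have k1 := A172671.keylem1 n
  have k2 := A172671.keylem2 n
  have k3 := A172671.keylem3 n
  have k4 := A172671.keylem4 n
  have hb := A172671.Brec n
  have hsum : ((((A172671.pp 0).eval (n:ℤ) : ℤ) : ℚ) * ((a172671 n : ℕ) : ℚ) + (((A172671.pp 1).eval (n:ℤ) : ℤ) : ℚ) * ((a172671 (n+1) : ℕ) : ℚ) + (((A172671.pp 2).eval (n:ℤ) : ℤ) : ℚ) * ((a172671 (n+2) : ℕ) : ℚ) + (((A172671.pp 3).eval (n:ℤ) : ℤ) : ℚ) * ((a172671 (n+3) : ℕ) : ℚ) + (((A172671.pp 4).eval (n:ℤ) : ℤ) : ℚ) * ((a172671 (n+4) : ℕ) : ℚ)) * ((n.factorial : ℚ))^6 = 0 := by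
    linear_combination k0 + k1 + k2 + k3 + k4 + (((3*n+12).factorial : ℚ)) * hb
  have hne : ((n.factorial : ℚ))^6 ≠ 0 :=
    pow_ne_zero _ (Nat.cast_ne_zero.mpr (Nat.factorial_ne_zero n))
  have hq := (mul_eq_zero.mp hsum).resolve_right hne
  simp only [Finset.sum_range_succ, Finset.sum_range_zero, Nat.add_zero, zero_add]
  exact_mod_cast hq
end
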